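/- arXiv:0806.2287 — 9 statements merged into one kernel-verified Lean document; each statement's English description precedes it below -/
import Mathlib

section
/- Let V_1, …, V_ℓ be an ordered bipartite decomposition of a finite simple graph H. Then for every i, the set U_i is an independent set in H; consequently, each H_i is a bipartite graph with parts U_i and V_i. -/
open SimpleGraph

/-- An ordered bipartite decomposition of a simple graph `H`: a sequence `P 0, …, P (ℓ-1)` of
vertex sets that (1) partitions the vertex set, (2) consists of independent sets, and
(3) for every `i` and `v ∈ P i` there is `j` such that every neighbour of `v` lies in
`P 0 ∪ ⋯ ∪ P (i-1) ∪ P j`. -/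
def IsOBD {V : Type*} (H : SimpleGraph V) {ℓ : ℕ} (P : Fin ℓ → Set V) : Prop :=
  (∀ v : V, ∃! i : Fin ℓ, v ∈ P i) ∧
  (∀ i : Fin ℓ, ∀ u ∈ P i, ∀ v ∈ P i, ¬ H.Adj u v) ∧
  (∀ i : Fin ℓ, ∀ v ∈ P i, ∃ j : Fin ℓ,
    ∀ u : V, H.Adj v u → (∃ k : Fin ℓ, k < i ∧ u ∈ P k) ∨ u ∈ P j)

/-- `obdU H P i` is the set `U_i`: vertices in `P 0 ∪ ⋯ ∪ P (i-1)` having a neighbour in `P i`. -/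
def obdU {V : Type*} (H : SimpleGraph V) {ℓ : ℕ} (P : Fin ℓ → Set V) (i : Fin ℓ) : Set V :=
  {u | (∃ v ∈ P i, H.Adj u v) ∧ ∃ k : Fin ℓ, k < i ∧ u ∈ P k}

/-- The edge set of `H_i`, the subgraph of `H` induced by `U_i ∪ V_i`. -/
def obdEdges {V : Type*} (H : SimpleGraph V) {ℓ : ℕ} (P : Fin ℓ → Set V) (i : Fin ℓ) :
    Set (Sym2 V) :=
  {e ∈ H.edgeSet | ∀ x ∈ e, x ∈ obdU H P i ∪ P i}

/-! Condition (3) says that the neighbours of a vertex `u ∈ V_k` lying in later parts all lie in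
a single part. If `u ∈ V_k` and `v ∈ V_m` in `U_i` were adjacent, then `k ≠ m` since `V_k` is
independent; say `k < m < i`. Then `v` and the neighbour of `u` in `V_i` are later neighbours of
`u` in different parts. As `V_i` is independent too, every edge of `H_i` joins `U_i` to `V_i`. -/

theorem SimpleGraph.exists_eq_mk_of_forall_mem_union {V : Type*} {G : SimpleGraph V}
    {A B : Set V} (hA : ∀ u ∈ A, ∀ v ∈ A, ¬ G.Adj u v) (hB : ∀ u ∈ B, ∀ v ∈ B, ¬ G.Adj u v)
    {e : Sym2 V} (he : e ∈ G.edgeSet) (heAB : ∀ x ∈ e, x ∈ A ∪ B) :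
    ∃ a b : V, a ∈ A ∧ b ∈ B ∧ e = s(a, b) := by
  induction e using Sym2.ind with
  | _ u v =>
    have hadj : G.Adj u v := he
    rcases heAB u (Sym2.mem_mk_left u v) with hu | hu <;>
      rcases heAB v (Sym2.mem_mk_right u v) with hv | hv
    · exact absurd hadj (hA u hu v hv)
    · exact ⟨u, v, hu, hv, rfl⟩
    · exact ⟨v, u, hv, hu, Sym2.eq_swap⟩
    · exact absurd hadj (hB u hu v hv)

namespace IsOBD

variable {V : Type*} {H : SimpleGraph V} {ℓ : ℕ} {P : Fin ℓ → Set V}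

theorem eq_of_mem_of_mem (hP : IsOBD H P) {v : V} {m n : Fin ℓ} (hm : v ∈ P m)
    (hn : v ∈ P n) : m = n :=
  (hP.1 v).unique hm hn

theorem independent (hP : IsOBD H P) (i : Fin ℓ) : ∀ u ∈ P i, ∀ v ∈ P i, ¬ H.Adj u v :=
  hP.2.1 i

theorem eq_of_adj_of_adj_of_lt (hP : IsOBD H P) {u v w : V} {k m n : Fin ℓ} (hu : u ∈ P k)
    (hv : v ∈ P m) (hw : w ∈ P n) (hkm : k < m) (hkn : k < n) (huv : H.Adj u v)
    (huw : H.Adj u w) : m = n := by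
  obtain ⟨j, hj⟩ := hP.2.2 k u hu
  have mem_of_lt : ∀ {x : V} {p : Fin ℓ}, x ∈ P p → k < p → H.Adj u x → x ∈ P j := by
    intro x p hx hkp hux
    rcases hj x hux with ⟨q, hqk, hxq⟩ | hxj
    · exact absurd (hP.eq_of_mem_of_mem hxq hx) (hqk.trans hkp).ne
    · exact hxj
  calc m = j := hP.eq_of_mem_of_mem hv (mem_of_lt hv hkm huv)
    _ = n := hP.eq_of_mem_of_mem (mem_of_lt hw hkn huw) hw

theorem not_adj_of_mem_obdU_of_lt (hP : IsOBD H P) {u v : V} {i k m : Fin ℓ}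
    (hu : u ∈ obdU H P i) (huk : u ∈ P k) (hvm : v ∈ P m) (hkm : k < m) (hmi : m < i) :
    ¬ H.Adj u v := by
  obtain ⟨w, hw, huw⟩ := hu.1
  exact fun huv => hmi.ne (hP.eq_of_adj_of_adj_of_lt huk hvm hw hkm (hkm.trans hmi) huv huw)

theorem obdU_independent (hP : IsOBD H P) (i : Fin ℓ) :
    ∀ u ∈ obdU H P i, ∀ v ∈ obdU H P i, ¬ H.Adj u v := by
  intro u hu v hv huv
  obtain ⟨k, hki, huk⟩ := hu.2
  obtain ⟨m, hmi, hvm⟩ := hv.2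
  rcases lt_trichotomy k m with hkm | rfl | hmk
  · exact hP.not_adj_of_mem_obdU_of_lt hu huk hvm hkm hmi huv
  · exact hP.independent k u huk v hvm huv
  · exact hP.not_adj_of_mem_obdU_of_lt hv hvm huk hmk hki huv.symm

end IsOBD

/-- In an ordered bipartite decomposition, every `U_i` is an independent set in `H`;
consequently each `H_i` is bipartite with parts `U_i` and `V_i`: every edge of `H_i`
joins a vertex of `U_i` to a vertex of `V_i`. -/
theorem obd_U_independent_and_bipartite {V : Type*} (H : SimpleGraph V) {ℓ : ℕ}
    (P : Fin ℓ → Set V) (hP : IsOBD H P) :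
    (∀ i : Fin ℓ, ∀ u ∈ obdU H P i, ∀ v ∈ obdU H P i, ¬ H.Adj u v) ∧
    (∀ i : Fin ℓ, ∀ e ∈ obdEdges H P i,
      ∃ u v : V, u ∈ obdU H P i ∧ v ∈ P i ∧ e = s(u, v)) := by
  refine ⟨hP.obdU_independent, fun i e he => ?_⟩
  exact SimpleGraph.exists_eq_mk_of_forall_mem_union (hP.obdU_independent i)
    (hP.independent i) he.1 he.2
end

section
/- Let H be a finite simple graph with maximum degree Δ(H). Then every ordered bipartite decomposition of H has width at least Δ(H)/2. -/
open SimpleGraph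

/-
Let `v ∈ V_i` and let `j` be the index given by condition (3). An edge from `v` to an earlier
class lies in `H_i`. Any other edge goes to `V_j` with `j ≠ i` (the classes are independent), so
it lies in `H_i` if `j < i` and in `H_j` if `j > i`. Hence every edge at `v` lies in `H_i ∪ H_j`,
and `deg v ≤ 2 · width`.
-/

section

variable {V : Type*} {H : SimpleGraph V} {ℓ : ℕ} {P : Fin ℓ → Set V}

theorem SimpleGraph.degree_le_ncard_of_incidenceSet_subset [Fintype V] [DecidableRel H.Adj]
    {v : V} {S : Set (Sym2 V)} (h : H.incidenceSet v ⊆ S) : H.degree v ≤ S.ncard := by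
  classical
  rw [← card_incidenceSet_eq_degree, ← Nat.card_eq_fintype_card, Nat.card_coe_set_eq]
  exact Set.ncard_le_ncard h

theorem mk_mem_obdEdges_of_lt {i k : Fin ℓ} {v u : V} (hv : v ∈ P i) (hu : u ∈ P k)
    (hki : k < i) (hadj : H.Adj v u) : s(v, u) ∈ obdEdges H P i := by
  refine ⟨hadj, fun x hx => ?_⟩
  rcases Sym2.mem_iff.mp hx with rfl | rfl
  · exact Or.inr hv
  · exact Or.inl ⟨⟨v, hv, hadj.symm⟩, k, hki, hu⟩

theorem IsOBD.exists_incidenceSet_subset (hP : IsOBD H P) {i : Fin ℓ} {v : V} (hv : v ∈ P i) :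
    ∃ j, H.incidenceSet v ⊆ obdEdges H P i ∪ obdEdges H P j := by
  obtain ⟨-, hindep, hnbr⟩ := hP
  obtain ⟨j, hj⟩ := hnbr i v hv
  refine ⟨j, fun e he => ?_⟩
  obtain ⟨u, rfl⟩ := Sym2.mem_iff_exists.mp he.2
  have hadj : H.Adj v u := he.1
  rcases hj u hadj with ⟨k, hki, hu⟩ | hu
  · exact Or.inl (mk_mem_obdEdges_of_lt hv hu hki hadj)
  have hij : i ≠ j := by
    rintro rfl
    exact hindep i v hv u hu hadj
  rcases hij.lt_or_gt with hij | hji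
  · exact Or.inr (Sym2.eq_swap ▸ mk_mem_obdEdges_of_lt hu hv hij hadj.symm)
  · exact Or.inl (mk_mem_obdEdges_of_lt hv hu hji hadj)

end

/-- Every ordered bipartite decomposition of a finite simple graph `H` has width at least
`Δ(H) / 2`, i.e. `Δ(H) ≤ 2 · width`. -/
theorem obd_width_ge_half_maxDegree {V : Type*} [Fintype V] (H : SimpleGraph V)
    [DecidableRel H.Adj] {ℓ : ℕ} (P : Fin ℓ → Set V) (hP : IsOBD H P) :
    H.maxDegree ≤ 2 * ⨆ i : Fin ℓ, (obdEdges H P i).ncard := by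
  refine maxDegree_le_of_forall_degree_le _ _ fun v => ?_
  obtain ⟨i, hv, -⟩ := hP.1 v
  obtain ⟨j, hsub⟩ := hP.exists_incidenceSet_subset hv
  have hle : ∀ k, (obdEdges H P k).ncard ≤ ⨆ i : Fin ℓ, (obdEdges H P i).ncard :=
    le_ciSup (Set.finite_range _).bddAbove
  calc H.degree v ≤ (obdEdges H P i ∪ obdEdges H P j).ncard :=
        degree_le_ncard_of_incidenceSet_subset hsub
    _ ≤ (obdEdges H P i).ncard + (obdEdges H P j).ncard := Set.ncard_union_le _ _
    _ ≤ 2 * ⨆ i : Fin ℓ, (obdEdges H P i).ncard := by linarith [hle i, hle j]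
end

section
/- For every integer k ≥ 4, the cycle graph on k vertices s_1, …, s_k (enumerated in cyclic order) has an ordered bipartite decomposition of width at most 2; indeed, V_1 = {s_1}, V_2 = {s_2, s_k}, and V_i = {s_i} for 3 ≤ i ≤ k−1 is such a decomposition. -/
/-!
Rank each vertex `v` of the cycle by the index of its part: `v` itself, except that the last
vertex `k - 1` joins part `1`. The decomposition axioms then become statements about ranks:
adjacent vertices have different ranks, and the neighbours of a vertex that have larger rank
all share one rank. For the width, `H_i` lives on three vertices `a, b, c` with `a, c`
non-adjacent (`1, 0, k - 1` for `i = 1`; otherwise `i - 1, i` and, when `i = k - 2`, also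
`k - 1`), so it is a subgraph of the path `a b c` and has at most two edges.
-/

open SimpleGraph

theorem SimpleGraph.cycleGraph_adj_iff_val {k : ℕ} (hk : 2 ≤ k) {u v : Fin k} :
    (cycleGraph k).Adj u v ↔ (u : ℕ) = v + 1 ∨ (v : ℕ) = u + 1 ∨
      ((u : ℕ) = 0 ∧ (v : ℕ) + 1 = k) ∨ ((v : ℕ) = 0 ∧ (u : ℕ) + 1 = k) := by
  have val_sub (a b : Fin k) :
      ((a - b : Fin k) : ℕ) = if (b : ℕ) ≤ a then (a : ℕ) - b else k + a - b := by
    split_ifs with h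
    · exact Fin.coe_sub_iff_le.2 h
    · exact Fin.coe_sub_iff_lt.2 (not_le.1 h)
  rw [cycleGraph_adj', val_sub, val_sub]
  have := u.isLt
  have := v.isLt
  split_ifs <;> omega

theorem SimpleGraph.ncard_edges_within_le_two {V : Type*} (H : SimpleGraph V) {S : Set V}
    {a b c : V} (hS : S ⊆ {a, b, c}) (hac : ¬H.Adj a c) :
    {e ∈ H.edgeSet | ∀ x ∈ e, x ∈ S}.ncard ≤ 2 := by
  have hsub : {e ∈ H.edgeSet | ∀ x ∈ e, x ∈ S} ⊆ {s(a, b), s(b, c)} := by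
    rintro ⟨x, y⟩ ⟨hxy, hmem⟩
    have hx := hS (hmem x (Sym2.mem_mk_left x y))
    have hy := hS (hmem y (Sym2.mem_mk_right x y))
    rw [mem_edgeSet] at hxy
    simp only [Set.mem_insert_iff, Set.mem_singleton_iff] at hx hy ⊢
    rcases hx with rfl | rfl | rfl <;> rcases hy with rfl | rfl | rfl <;>
      simp_all [Sym2.eq_swap, H.adj_comm]
  exact (Set.ncard_le_ncard hsub).trans ((Set.ncard_insert_le _ _).trans (by simp))

section Rank

variable {V : Type*} {H : SimpleGraph V} {ℓ : ℕ} {P : Fin ℓ → Set V} {r : V → ℕ}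

theorem isOBD_of_rank (hP : ∀ i v, v ∈ P i ↔ r v = i) (hr : ∀ v, r v < ℓ)
    (hindep : ∀ u v, H.Adj u v → r u ≠ r v)
    (hlater : ∀ v u w, H.Adj v u → H.Adj v w → r v < r u → r v < r w → r u = r w) :
    IsOBD H P := by
  refine ⟨fun v => ⟨⟨r v, hr v⟩, (hP _ v).2 rfl,
      fun i hi => Fin.ext ((hP i v).1 hi).symm⟩,
    fun i u hu v hv huv => hindep u v huv (((hP i u).1 hu).trans ((hP i v).1 hv).symm),
    fun i v hv => ?_⟩
  have earlier {u : V} (hu : r u < r v) : ∃ k < i, u ∈ P k :=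
    ⟨⟨r u, hr u⟩, Fin.lt_def.2 (((hP i v).1 hv) ▸ hu), (hP _ u).2 rfl⟩
  by_cases hnext : ∃ w, H.Adj v w ∧ r v < r w
  · obtain ⟨w, hvw, hw⟩ := hnext
    refine ⟨⟨r w, hr w⟩, fun u hvu => ?_⟩
    rcases (hindep v u hvu).symm.lt_or_gt with hu | hu
    · exact Or.inl (earlier hu)
    · exact Or.inr ((hP _ u).2 (hlater v u w hvu hvw hu hw))
  · push Not at hnext
    exact ⟨i, fun u hvu => Or.inl (earlier ((hnext u hvu).lt_of_ne (hindep v u hvu).symm))⟩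

def obdVerticesOfRank (H : SimpleGraph V) (r : V → ℕ) (i : ℕ) : Set V :=
  {x | ((∃ v, r v = i ∧ H.Adj x v) ∧ r x < i) ∨ r x = i}

theorem obdU_union_eq_obdVerticesOfRank (hP : ∀ i v, v ∈ P i ↔ r v = i) (i : Fin ℓ) :
    obdU H P i ∪ P i = obdVerticesOfRank H r i := by
  ext x
  simp only [obdU, obdVerticesOfRank, Set.mem_union, Set.mem_ofPred_eq, hP]
  refine or_congr (and_congr Iff.rfl ⟨?_, fun hx => ⟨⟨r x, hx.trans i.isLt⟩, hx, rfl⟩⟩)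
    Iff.rfl
  rintro ⟨j, hj, hx⟩
  exact hx ▸ hj

theorem ncard_obdEdges_le_two_of_rank (hP : ∀ i v, v ∈ P i ↔ r v = i) {i : Fin ℓ}
    {a b c : V} (hac : ¬H.Adj a c) (habc : obdVerticesOfRank H r i ⊆ {a, b, c}) :
    (obdEdges H P i).ncard ≤ 2 :=
  H.ncard_edges_within_le_two ((obdU_union_eq_obdVerticesOfRank hP i).trans_subset habc) hac

end Rank

def cycleRank (k : ℕ) (v : Fin k) : ℕ := if (v : ℕ) + 1 = k then 1 else v

section CycleRank

variable {k : ℕ}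

theorem cycleRank_lt (hk : 3 ≤ k) (v : Fin k) : cycleRank k v < k - 1 := by
  have := v.isLt
  unfold cycleRank
  split_ifs <;> omega

theorem cycleRank_ne_of_adj (hk : 4 ≤ k) {u v : Fin k} (huv : (cycleGraph k).Adj u v) :
    cycleRank k u ≠ cycleRank k v := by
  rw [cycleGraph_adj_iff_val (by omega)] at huv
  have := u.isLt
  have := v.isLt
  unfold cycleRank
  split_ifs <;> omega

theorem cycleRank_eq_of_adj_of_lt (hk : 2 ≤ k) {v u w : Fin k} (hu : (cycleGraph k).Adj v u)
    (hw : (cycleGraph k).Adj v w) (hvu : cycleRank k v < cycleRank k u)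
    (hvw : cycleRank k v < cycleRank k w) : cycleRank k u = cycleRank k w := by
  rw [cycleGraph_adj_iff_val hk] at hu hw
  have := u.isLt
  have := v.isLt
  have := w.isLt
  unfold cycleRank at *
  split_ifs at * <;> omega

theorem val_of_mem_obdVerticesOfRank_cycleRank (hk : 4 ≤ k) {i : ℕ} {x : Fin k}
    (hx : x ∈ obdVerticesOfRank (cycleGraph k) (cycleRank k) i) :
    (i = 1 ∧ ((x : ℕ) = 0 ∨ (x : ℕ) = 1 ∨ (x : ℕ) + 1 = k)) ∨
      (i ≠ 1 ∧
        ((x : ℕ) + 1 = i ∨ (x : ℕ) = i ∨ (i + 2 = k ∧ (x : ℕ) + 1 = k))) := by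
  have := x.isLt
  rcases hx with ⟨⟨v, hv, hxv⟩, hx⟩ | hx
  · rw [cycleGraph_adj_iff_val (by omega)] at hxv
    have := v.isLt
    unfold cycleRank at *
    split_ifs at * <;> omega
  · unfold cycleRank at *
    split_ifs at * <;> omega

theorem exists_obdVerticesOfRank_cycleRank_subset (hk : 4 ≤ k) {i : ℕ} (hi : i < k - 1) :
    ∃ a b c : Fin k, ¬(cycleGraph k).Adj a c ∧
      obdVerticesOfRank (cycleGraph k) (cycleRank k) i ⊆ {a, b, c} := by
  have hk2 : 2 ≤ k := by omega
  by_cases hi1 : i = 1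
  · refine ⟨⟨1, by omega⟩, ⟨0, by omega⟩, ⟨k - 1, by omega⟩, ?_, fun x hx => ?_⟩
    · rw [cycleGraph_adj_iff_val hk2, Fin.val_mk, Fin.val_mk]
      omega
    · replace hx := val_of_mem_obdVerticesOfRank_cycleRank hk hx
      simp only [Set.mem_insert_iff, Set.mem_singleton_iff, Fin.ext_iff]
      omega
  · refine ⟨⟨i - 1, by omega⟩, ⟨i, by omega⟩,
      ⟨if i + 2 = k then k - 1 else i - 1, by split_ifs <;> omega⟩, ?_, fun x hx => ?_⟩
    · rw [cycleGraph_adj_iff_val hk2, Fin.val_mk, Fin.val_mk]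
      split_ifs <;> omega
    · replace hx := val_of_mem_obdVerticesOfRank_cycleRank hk hx
      simp only [Set.mem_insert_iff, Set.mem_singleton_iff, Fin.ext_iff]
      split_ifs <;> omega

end CycleRank

-- Vertices and parts are indexed from 0: `s_{i+1}` is vertex `i : Fin k` and `V_{i+1}` is `P i`.
/-- For every `k ≥ 4`, the cycle graph on `k` vertices `s₁, …, s_k` (in cyclic order) has an
ordered bipartite decomposition of width at most 2; indeed `V₁ = {s₁}`, `V₂ = {s₂, s_k}`
and `V_i = {s_i}` for `3 ≤ i ≤ k-1` is such a decomposition.  (Vertices are indexed from 0: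
`s_{i+1}` is vertex `i : Fin k`, and part `V_{i+1}` is `P i` for `i : Fin (k-1)`.) -/
theorem cycle_obd (k : ℕ) (hk : 4 ≤ k)
    (P : Fin (k - 1) → Set (Fin k))
    (hP : ∀ i : Fin (k - 1), P i =
      if (i : ℕ) = 1 then
        ({⟨1, by omega⟩, ⟨k - 1, by omega⟩} : Set (Fin k))
      else
        ({⟨(i : ℕ), lt_of_lt_of_le i.isLt (Nat.sub_le k 1)⟩} : Set (Fin k))) :
    IsOBD (SimpleGraph.cycleGraph k) P ∧
    ∀ i : Fin (k - 1), (obdEdges (SimpleGraph.cycleGraph k) P i).ncard ≤ 2 := by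
  have hmem (i : Fin (k - 1)) (v : Fin k) : v ∈ P i ↔ cycleRank k v = i := by
    rw [hP, cycleRank]
    split_ifs <;> simp only [Set.mem_insert_iff, Set.mem_singleton_iff, Fin.ext_iff] <;> omega
  refine ⟨isOBD_of_rank hmem (cycleRank_lt (by omega)) (fun _ _ => cycleRank_ne_of_adj hk)
    (fun _ _ _ => cycleRank_eq_of_adj_of_lt (by omega)), fun i => ?_⟩
  obtain ⟨a, b, c, hac, habc⟩ := exists_obdVerticesOfRank_cycleRank_subset hk i.isLt
  exact ncard_obdEdges_le_two_of_rank hmem hac habc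
end

section
/- Every finite tree T (a connected acyclic simple graph) has an ordered bipartite decomposition of width at most Δ(T), where Δ(T) is the maximum degree of T. -/
open SimpleGraph

/-!
Root the tree at `r` and list its vertices as singletons in order of decreasing distance from `r`.
A vertex then has at most one later neighbour, its parent, which gives condition (3). Since a
tree has no triangles, every edge of `H_i` is incident to the single vertex of `V_i`, so `H_i`
has at most `Δ(T)` edges.
-/

theorem Fintype.exists_equiv_fin_antitone {V α : Type*} [Fintype V] [LinearOrder α] (f : V → α) :
    ∃ e : Fin (Fintype.card V) ≃ V, Antitone (f ∘ e) := by
  let e₀ := (Fintype.equivFin V).symm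
  let σ := Tuple.sort (OrderDual.toDual ∘ f ∘ e₀)
  exact ⟨σ.trans e₀, Tuple.monotone_sort (OrderDual.toDual ∘ f ∘ e₀)⟩

namespace SimpleGraph

variable {V : Type*} {T : SimpleGraph V}

theorem IsTree.exists_forall_adj_dist_le (hT : T.IsTree) (r v : V) :
    ∃ p, ∀ u, T.Adj v u → T.dist r u ≤ T.dist r v → u = p := by
  classical
  obtain ⟨q, hq, -⟩ := (hT.connected r v).exists_path_of_dist
  refine ⟨q.penultimate, fun u hadj hle => ?_⟩
  have hlt : T.dist r u < T.dist r v := hle.lt_of_ne (hT.dist_ne_of_adj r hadj).symm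
  obtain ⟨q', hq', hlen'⟩ := (hT.connected r u).exists_path_of_dist
  have hv : v ∉ q'.support := fun hv => by
    have := (dist_le (q'.takeUntil v hv)).trans (q'.length_takeUntil_le_length hv)
    omega
  exact hT.isAcyclic.eq_penultimate_of_adj_end hq hadj
    (hT.isAcyclic.mem_support_of_ne_mem_support_of_adj_of_isPath hq hq' hadj hv)

end SimpleGraph

theorem isOBD_singleton {V : Type*} {H : SimpleGraph V} {n : ℕ} (e : Fin n ≃ V)
    (h : ∀ i, ∃ w, ∀ u, H.Adj (e i) u → e.symm u < i ∨ u = w) :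
    IsOBD H (fun i => {e i}) := by
  refine ⟨fun v => ⟨e.symm v, by simp, fun i hi => (e.symm_apply_eq.2 hi).symm⟩,
    fun i u hu v hv hadj => ?_, fun i v hv => ?_⟩
  · rw [Set.mem_singleton_iff] at hu hv
    exact hadj.ne (hu.trans hv.symm)
  · rw [Set.mem_singleton_iff] at hv
    subst hv
    obtain ⟨w, hw⟩ := h i
    refine ⟨e.symm w, fun u hadj => ?_⟩
    rcases hw u hadj with hu | rfl
    · exact .inl ⟨e.symm u, hu, by simp⟩
    · exact .inr (by simp)

theorem ncard_obdEdges_singleton_le_degree {V : Type*} [Fintype V] {H : SimpleGraph V}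
    [DecidableRel H.Adj] (hH : H.CliqueFree 3) {n : ℕ} (e : Fin n → V) (i : Fin n) :
    (obdEdges H (fun i => {e i}) i).ncard ≤ H.degree (e i) := by
  classical
  have hU : ∀ x ∈ obdU H (fun i => {e i}) i, H.Adj x (e i) := by
    rintro x ⟨⟨y, rfl, hxy⟩, -⟩
    exact hxy
  have hsub : obdEdges H (fun i => {e i}) i ⊆ H.incidenceFinset (e i) := by
    rintro ⟨a, b⟩ ⟨hab, hmem⟩
    rw [Finset.mem_coe, mem_incidenceFinset]
    refine ⟨hab, ?_⟩
    rcases hmem a (Sym2.mem_mk_left a b), hmem b (Sym2.mem_mk_right a b) with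
      ⟨ha | rfl, hb | rfl⟩
    · exact (hH {a, b, e i} (is3Clique_triple_iff.2 ⟨hab, hU a ha, hU b hb⟩)).elim
    all_goals simp
  calc (obdEdges H (fun i => {e i}) i).ncard
      ≤ (H.incidenceFinset (e i) : Set (Sym2 V)).ncard := Set.ncard_le_ncard hsub
    _ = H.degree (e i) := by rw [Set.ncard_coe_finset, card_incidenceFinset_eq_degree]

/-- Every finite tree `T` (a connected acyclic simple graph) has an ordered bipartite
decomposition of width at most `Δ(T)`, the maximum degree of `T`. -/
theorem tree_obd {V : Type*} [Fintype V] (T : SimpleGraph V) [DecidableRel T.Adj]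
    (hT : T.IsTree) :
    ∃ (ℓ : ℕ) (P : Fin ℓ → Set V),
      IsOBD T P ∧ ∀ i, (obdEdges T P i).ncard ≤ T.maxDegree := by
  obtain ⟨r⟩ := hT.connected.nonempty
  obtain ⟨e, he⟩ := Fintype.exists_equiv_fin_antitone (T.dist r)
  refine ⟨_, fun i => {e i}, isOBD_singleton e fun i => ?_, fun i =>
    (ncard_obdEdges_singleton_le_degree (hT.isAcyclic.cliqueFree le_rfl) e i).trans
      (T.degree_le_maxDegree _)⟩
  obtain ⟨p, hp⟩ := hT.exists_forall_adj_dist_le r (e i)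
  refine ⟨p, fun u hadj => ?_⟩
  rcases le_or_gt (T.dist r u) (T.dist r (e i)) with hle | hlt
  · exact .inr (hp u hadj hle)
  · exact .inl (he.reflect_lt (by simpa using hlt))
end

section
/- For all positive integers a and b, the a×b grid graph has an ordered bipartite decomposition of width at most 2·min(a,b); indeed, taking V_i to be the set of vertices at Manhattan (lattice) distance i−1 from the corner vertex (0,0) gives such a decomposition. -/
open SimpleGraph

/-- The `a × b` grid graph: vertices `(i, j)` with `0 ≤ i ≤ a-1`, `0 ≤ j ≤ b-1`, adjacent
exactly when they agree in one coordinate and differ by exactly 1 in the other. -/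
def gridGraph (a b : ℕ) : SimpleGraph (Fin a × Fin b) where
  Adj u v :=
    (u.1 = v.1 ∧ ((u.2 : ℕ) + 1 = (v.2 : ℕ) ∨ (v.2 : ℕ) + 1 = (u.2 : ℕ))) ∨
    (u.2 = v.2 ∧ ((u.1 : ℕ) + 1 = (v.1 : ℕ) ∨ (v.1 : ℕ) + 1 = (u.1 : ℕ)))
  symm := by
    constructor
    intro u v h
    rcases h with ⟨h1, h2⟩ | ⟨h1, h2⟩
    · exact Or.inl ⟨h1.symm, h2.symm⟩
    · exact Or.inr ⟨h1.symm, h2.symm⟩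
  loopless := by
    constructor
    intro u h
    rcases h with ⟨_, h⟩ | ⟨_, h⟩ <;> omega


/-!
Along every edge of the grid the coordinate sum `v.1 + v.2` changes by exactly one, so its level
sets form an ordered bipartite decomposition in which the later neighbours of a vertex all lie on
the next level. An edge of `H_i` therefore joins a vertex of level `i` to one of its at most two
lower neighbours, and a level meets every row and every column at most once.
-/

section LevelSets

variable {V : Type*}

def IsGraded (H : SimpleGraph V) (f : V → ℕ) : Prop :=
  ∀ ⦃u v⦄, H.Adj u v → f u + 1 = f v ∨ f v + 1 = f u

def levelSets (f : V → ℕ) (ℓ : ℕ) (i : Fin ℓ) : Set V := {v | f v = i}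

variable {H : SimpleGraph V} {f : V → ℕ} {ℓ : ℕ}

theorem IsGraded.isOBD_levelSets (hf : IsGraded H f) (hℓ : ∀ v, f v < ℓ) :
    IsOBD H (levelSets f ℓ) := by
  refine ⟨fun v => ⟨⟨f v, hℓ v⟩, rfl, fun i hi => Fin.ext hi.symm⟩, ?_, ?_⟩
  · intro i u (hu : f u = i) v (hv : f v = i) huv
    rcases hf huv with h | h <;> omega
  · -- the neighbours of `v` not on an earlier level are on level `i + 1`, which is then `< ℓ`
    intro i v (hv : f v = i)
    refine ⟨⟨min ((i : ℕ) + 1) (ℓ - 1), by omega⟩, fun u hvu => ?_⟩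
    rcases hf hvu with h | h
    · exact Or.inr (show f u = min ((i : ℕ) + 1) (ℓ - 1) by have := hℓ u; omega)
    · exact Or.inl ⟨⟨f u, hℓ u⟩, Fin.lt_def.mpr (show f u < i by omega), rfl⟩

theorem IsGraded.level_of_mem_obdU_union (hf : IsGraded H f) {i : Fin ℓ} {x : V}
    (hx : x ∈ obdU H (levelSets f ℓ) i ∪ levelSets f ℓ i) : f x + 1 = i ∨ f x = i := by
  rcases hx with ⟨⟨w, (hw : f w = i), hxw⟩, k, hk, (hxk : f x = k)⟩ | hx
  · rw [Fin.lt_def] at hk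
    rcases hf hxw with h | h <;> omega
  · exact Or.inr hx

theorem IsGraded.exists_eq_mk_of_mem_obdEdges (hf : IsGraded H f) {i : Fin ℓ} {e : Sym2 V}
    (he : e ∈ obdEdges H (levelSets f ℓ) i) :
    ∃ u v, f v = i ∧ f u + 1 = f v ∧ H.Adj u v ∧ e = s(u, v) := by
  induction e using Sym2.ind with
  | _ x y =>
    obtain ⟨hxy, hmem⟩ := he
    rw [mem_edgeSet] at hxy
    have hx := hf.level_of_mem_obdU_union (hmem x (Sym2.mem_mk_left x y))
    have hy := hf.level_of_mem_obdU_union (hmem y (Sym2.mem_mk_right x y))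
    rcases hf hxy with h | h
    · exact ⟨x, y, by omega, h, hxy, rfl⟩
    · exact ⟨y, x, by omega, h, hxy.symm, Sym2.eq_swap⟩

theorem IsGraded.ncard_obdEdges_le [Finite V] (hf : IsGraded H f) {d : ℕ} (g : Fin d → V → V)
    (hg : ∀ u v, H.Adj u v → f u + 1 = f v → ∃ k, u = g k v) (i : Fin ℓ) :
    (obdEdges H (levelSets f ℓ) i).ncard ≤ d * (levelSets f ℓ i).ncard := by
  let edge : Fin d × levelSets f ℓ i → Sym2 V := fun p => s(g p.1 p.2, p.2)
  have hsub : obdEdges H (levelSets f ℓ) i ⊆ Set.range edge := by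
    intro e he
    obtain ⟨u, v, hv, huv, hadj, rfl⟩ := hf.exists_eq_mk_of_mem_obdEdges he
    obtain ⟨k, rfl⟩ := hg u v hadj huv
    exact ⟨(k, ⟨v, hv⟩), rfl⟩
  calc _ ≤ (Set.range edge).ncard := Set.ncard_le_ncard hsub
    _ = Nat.card (Set.range edge) := (Nat.card_coe_set_eq _).symm
    _ ≤ Nat.card (Fin d × levelSets f ℓ i) := Finite.card_range_le edge
    _ = d * (levelSets f ℓ i).ncard := by rw [Nat.card_prod, Nat.card_fin, Nat.card_coe_set_eq]

end LevelSets

section Grid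

variable {a b : ℕ}

theorem gridGraph_isGraded : IsGraded (gridGraph a b) (fun v => (v.1 : ℕ) + v.2) := by
  rintro u v (⟨h1, _⟩ | ⟨h1, _⟩) <;> · have := congrArg Fin.val h1; dsimp only; omega

def gridLowerNeighbour : Fin 2 → Fin a × Fin b → Fin a × Fin b :=
  ![fun v => (⟨v.1 - 1, by omega⟩, v.2), fun v => (v.1, ⟨v.2 - 1, by omega⟩)]

theorem exists_eq_gridLowerNeighbour {u v : Fin a × Fin b} (h : (gridGraph a b).Adj u v)
    (huv : (u.1 : ℕ) + u.2 + 1 = v.1 + v.2) : ∃ k, u = gridLowerNeighbour k v := by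
  rcases h with ⟨h1, _⟩ | ⟨h1, _⟩ <;> have := congrArg Fin.val h1
  · exact ⟨1, Prod.ext h1 (Fin.ext (show (u.2 : ℕ) = v.2 - 1 by omega))⟩
  · exact ⟨0, Prod.ext (Fin.ext (show (u.1 : ℕ) = v.1 - 1 by omega)) h1⟩

theorem ncard_grid_antidiagonal_le (n : ℕ) :
    {v : Fin a × Fin b | (v.1 : ℕ) + v.2 = n}.ncard ≤ min a b := by
  let D : Set (Fin a × Fin b) := {v | (v.1 : ℕ) + v.2 = n}
  have hfst : D.ncard ≤ (Set.univ : Set (Fin a)).ncard :=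
    Set.ncard_le_ncard_of_injOn Prod.fst (fun _ _ => Set.mem_univ _)
      (fun x (hx : (x.1 : ℕ) + x.2 = n) y (hy : (y.1 : ℕ) + y.2 = n) h =>
        Prod.ext h (Fin.ext (by have := congrArg Fin.val h; omega))) Set.finite_univ
  have hsnd : D.ncard ≤ (Set.univ : Set (Fin b)).ncard :=
    Set.ncard_le_ncard_of_injOn Prod.snd (fun _ _ => Set.mem_univ _)
      (fun x (hx : (x.1 : ℕ) + x.2 = n) y (hy : (y.1 : ℕ) + y.2 = n) h =>
        Prod.ext (Fin.ext (by have := congrArg Fin.val h; omega)) h) Set.finite_univ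
  simp only [Set.ncard_univ, Nat.card_fin] at hfst hsnd
  exact le_min hfst hsnd

end Grid

theorem grid_obd_general (a b : ℕ) :
    IsOBD (gridGraph a b)
      (fun i : Fin (a + b - 1) => {v : Fin a × Fin b | (v.1 : ℕ) + (v.2 : ℕ) = (i : ℕ)}) ∧
    ∀ i : Fin (a + b - 1),
      (obdEdges (gridGraph a b)
        (fun i : Fin (a + b - 1) => {v : Fin a × Fin b | (v.1 : ℕ) + (v.2 : ℕ) = (i : ℕ)})
        i).ncard ≤ 2 * min a b := by
  have hsum_lt (v : Fin a × Fin b) : (v.1 : ℕ) + v.2 < a + b - 1 := by omega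
  refine ⟨gridGraph_isGraded.isOBD_levelSets hsum_lt, fun i => ?_⟩
  calc _ ≤ 2 * (levelSets (fun v : Fin a × Fin b => (v.1 : ℕ) + v.2) (a + b - 1) i).ncard :=
        gridGraph_isGraded.ncard_obdEdges_le gridLowerNeighbour
          (fun _ _ => exists_eq_gridLowerNeighbour) i
    _ ≤ 2 * min a b := Nat.mul_le_mul_left 2 (ncard_grid_antidiagonal_le i)

/-- For all positive `a` and `b`, the `a × b` grid graph has an ordered bipartite
decomposition of width at most `2 · min a b`; indeed, taking the `i`-th part to consist of
the vertices at Manhattan distance `i - 1` from the corner `(0, 0)` (here: `P i` is the set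
of vertices at distance `i` for `i : Fin (a + b - 1)`) gives such a decomposition. -/
theorem grid_obd (a b : ℕ) (ha : 0 < a) (hb : 0 < b) :
    IsOBD (gridGraph a b)
      (fun i : Fin (a + b - 1) => {v : Fin a × Fin b | (v.1 : ℕ) + (v.2 : ℕ) = (i : ℕ)}) ∧
    ∀ i : Fin (a + b - 1),
      (obdEdges (gridGraph a b)
        (fun i : Fin (a + b - 1) => {v : Fin a × Fin b | (v.1 : ℕ) + (v.2 : ℕ) = (i : ℕ)})
        i).ncard ≤ 2 * min a b :=
  grid_obd_general a b
end

section
/- Let F be a finite simple graph and let H be a proper subdivision of F, i.e., H is obtained from F by replacing every edge of F by a path with at least one internal vertex. Then H has an ordered bipartite decomposition of width at most 2·Δ(H), where Δ(H) is the maximum degree of H. -/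
open SimpleGraph

/-- `H` is a proper subdivision of `F`: there is an injection `f` of the vertices of `F` into
those of `H` and, for each edge `u v` of `F`, a path in `H` from `f u` to `f v` of length at
least 2 (so with at least one internal vertex); opposite orientations give reversed paths;
the only branch vertices on the path of an edge are its endpoints; the paths of distinct
edges meet only in branch vertices (internal disjointness); and every vertex and every edge
of `H` lies on one of these paths (or, for vertices, is a branch vertex). -/
def IsProperSubdivision {α β : Type*} (F : SimpleGraph α) (H : SimpleGraph β) : Prop :=
  ∃ (f : α → β) (p : ∀ u v : α, F.Adj u v → H.Walk (f u) (f v)),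
    Function.Injective f ∧
    (∀ u v (h : F.Adj u v), (p u v h).IsPath) ∧
    (∀ u v (h : F.Adj u v), 2 ≤ (p u v h).length) ∧
    (∀ u v (h : F.Adj u v), p v u h.symm = (p u v h).reverse) ∧
    (∀ u v (h : F.Adj u v), ∀ a : α, f a ∈ (p u v h).support → a = u ∨ a = v) ∧
    (∀ u v u' v' (h : F.Adj u v) (h' : F.Adj u' v'), s(u, v) ≠ s(u', v') →
      ∀ w : β, w ∈ (p u v h).support → w ∈ (p u' v' h').support → w ∈ Set.range f) ∧
    (∀ w : β, w ∈ Set.range f ∨ ∃ u v, ∃ h : F.Adj u v, w ∈ (p u v h).support) ∧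
    (∀ e ∈ H.edgeSet, ∃ u v, ∃ h : F.Adj u v, e ∈ (p u v h).edges)

/-! Rank the branch vertices and orient every path of the subdivision from its lower-ranked end.
Give `f a` the time `rank a * |β|` and the `k`-th vertex of an outgoing path of `f a` the time
`rank a * |β| + k`; as paths are shorter than `|β|`, times increase along every oriented path.
The later neighbours of a branch vertex `f a` are the first internal vertices of its outgoing
paths, all at time `rank a * |β| + 1`, and an internal vertex has only its successor as a later
neighbour, so the fibres of the time function form an ordered bipartite decomposition.
In any such decomposition `U_i` is independent, hence `H_i` has at most `∑_{v ∈ V_i} deg v`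
edges. A fibre is either a single branch vertex, or consists of internal vertices (of degree 2)
at the same position of distinct outgoing paths of one `f a`, so at most `deg (f a)` of them. -/

section OrderedBipartiteDecomposition

variable {V : Type*} {H : SimpleGraph V} {ℓ : ℕ} {P : Fin ℓ → Set V}

lemma isOBD_fibers {t : V → ℕ} (ht : ∀ v, t v < ℓ)
    (hadj : ∀ {v w}, H.Adj v w → t v ≠ t w)
    (hlater : ∀ {v w w'}, H.Adj v w → H.Adj v w' → t v < t w → t v < t w' → t w = t w') :
    IsOBD H (fun i : Fin ℓ => {v | t v = i}) := by
  refine ⟨fun v => ⟨⟨t v, ht v⟩, rfl, fun j hj => Fin.ext hj.symm⟩,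
    fun i u hu v hv huv => hadj huv (hu.trans hv.symm), fun i v hv => ?_⟩
  have earlier {u} (hu : t u < t v) : ∃ k : Fin ℓ, k < i ∧ u ∈ {v | t v = k} :=
    ⟨⟨t u, ht u⟩, Fin.lt_def.2 (hv ▸ hu), rfl⟩
  by_cases hw : ∃ w, H.Adj v w ∧ t v < t w
  · obtain ⟨w, hvw, hw⟩ := hw
    refine ⟨⟨t w, ht w⟩, fun u hvu => ?_⟩
    rcases lt_or_gt_of_ne (hadj hvu) with hu | hu
    · exact Or.inr (hlater hvu hvw hu hw)
    · exact Or.inl (earlier hu)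
  · simp only [not_exists, not_and, not_lt] at hw
    exact ⟨i, fun u hvu => Or.inl (earlier ((hw u hvu).lt_of_ne (hadj hvu).symm))⟩

namespace IsOBD

lemma eq_of_adj_of_lt (hP : IsOBD H P) {x y z : V} {i j k : Fin ℓ} (hx : x ∈ P i)
    (hy : y ∈ P j) (hz : z ∈ P k) (hxy : H.Adj x y) (hxz : H.Adj x z) (hij : i < j)
    (hik : i < k) : j = k := by
  obtain ⟨hpart, -, hnbr⟩ := hP
  obtain ⟨m, hm⟩ := hnbr i x hx
  have later {w n} (hxw : H.Adj x w) (hw : w ∈ P n) (hin : i < n) : n = m := by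
    rcases hm w hxw with ⟨n', hn', hw'⟩ | hw'
    · exact absurd ((hpart w).unique hw hw') (hin.trans' hn').ne'
    · exact (hpart w).unique hw hw'
  exact (later hxy hy hij).trans (later hxz hz hik).symm

lemma not_adj_of_mem_obdU (hP : IsOBD H P) {i : Fin ℓ} {x y : V} (hx : x ∈ obdU H P i)
    (hy : y ∈ obdU H P i) : ¬ H.Adj x y := by
  intro hxy
  obtain ⟨⟨m, hm, hxm⟩, kx, hkx, hxk⟩ := hx
  obtain ⟨⟨m', hm', hym'⟩, ky, hky, hyk⟩ := hy
  rcases lt_trichotomy kx ky with h | rfl | h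
  · exact hky.ne (hP.eq_of_adj_of_lt hxk hyk hm hxy hxm h (h.trans hky))
  · exact hP.2.1 kx x hxk y hyk hxy
  · exact hkx.ne (hP.eq_of_adj_of_lt hyk hxk hm' hxy.symm hym' h (h.trans hkx))

lemma exists_mem_of_mem_obdEdges (hP : IsOBD H P) {i : Fin ℓ} {e : Sym2 V}
    (he : e ∈ obdEdges H P i) : ∃ v ∈ P i, v ∈ e := by
  induction e using Sym2.ind with
  | _ x y =>
    obtain ⟨hxy, hmem⟩ := he
    by_cases hx : x ∈ P i
    · exact ⟨x, hx, Sym2.mem_mk_left x y⟩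
    by_cases hy : y ∈ P i
    · exact ⟨y, hy, Sym2.mem_mk_right x y⟩
    exact absurd hxy (hP.not_adj_of_mem_obdU ((hmem x (Sym2.mem_mk_left x y)).resolve_right hx)
      ((hmem y (Sym2.mem_mk_right x y)).resolve_right hy))

lemma ncard_obdEdges_le [Fintype V] [DecidableRel H.Adj] (hP : IsOBD H P) (i : Fin ℓ) {d : ℕ}
    (hd : ∀ v ∈ P i, H.degree v ≤ d) : (obdEdges H P i).ncard ≤ (P i).ncard * d := by
  classical
  have hsub : obdEdges H P i ⊆ ↑((P i).toFinset.biUnion fun v => H.incidenceFinset v) := by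
    intro e he
    obtain ⟨v, hv, hve⟩ := hP.exists_mem_of_mem_obdEdges he
    rw [Finset.coe_biUnion]
    exact Set.mem_biUnion (by simpa using hv) (by simpa using ⟨he.1, hve⟩)
  calc (obdEdges H P i).ncard
      ≤ ((P i).toFinset.biUnion fun v => H.incidenceFinset v).card := by
        rw [← Set.ncard_coe_finset]; exact Set.ncard_le_ncard hsub
    _ ≤ (P i).toFinset.card * d :=
        Finset.card_biUnion_le_card_mul _ _ _ fun v hv => by
          simpa [card_incidenceFinset_eq_degree] using hd v (by simpa using hv)
    _ = (P i).ncard * d := by rw [Set.ncard_eq_toFinset_card']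

end IsOBD

end OrderedBipartiteDecomposition

structure ProperSubdivision {α β : Type*} (F : SimpleGraph α) (H : SimpleGraph β) where
  f : α → β
  p : ∀ u v : α, F.Adj u v → H.Walk (f u) (f v)
  injective : Function.Injective f
  isPath : ∀ u v h, (p u v h).IsPath
  two_le_length : ∀ u v h, 2 ≤ (p u v h).length
  reverse : ∀ u v (h : F.Adj u v), p v u h.symm = (p u v h).reverse
  eq_or_eq_of_mem_support : ∀ u v h a, f a ∈ (p u v h).support → a = u ∨ a = v
  mem_range_of_mem_support : ∀ u v u' v' (h : F.Adj u v) (h' : F.Adj u' v'),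
    s(u, v) ≠ s(u', v') →
      ∀ w : β, w ∈ (p u v h).support → w ∈ (p u' v' h').support → w ∈ Set.range f
  mem_range_or_mem_support : ∀ w : β,
    w ∈ Set.range f ∨ ∃ u v, ∃ h : F.Adj u v, w ∈ (p u v h).support
  exists_mem_edges : ∀ e ∈ H.edgeSet, ∃ u v, ∃ h : F.Adj u v, e ∈ (p u v h).edges

lemma IsProperSubdivision.nonempty {α β : Type*} {F : SimpleGraph α} {H : SimpleGraph β}
    (hsub : IsProperSubdivision F H) : Nonempty (ProperSubdivision F H) :=
  let ⟨f, p, h₁, h₂, h₃, h₄, h₅, h₆, h₇, h₈⟩ := hsub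
  ⟨⟨f, p, h₁, h₂, h₃, h₄, h₅, h₆, h₇, h₈⟩⟩

lemma Nat.mul_add_lt_mul {C x y k : ℕ} (hxy : x < y) (hk : k < C) : x * C + k < y * C :=
  calc x * C + k < (x + 1) * C := by rw [add_one_mul]; omega
    _ ≤ y * C := Nat.mul_le_mul_right C hxy

lemma Nat.mul_add_inj {C x y k k' : ℕ} (hk : k < C) (hk' : k' < C)
    (h : x * C + k = y * C + k') : x = y ∧ k = k' := by
  rcases lt_trichotomy x y with hxy | rfl | hxy
  · have := Nat.mul_add_lt_mul hxy hk; omega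
  · omega
  · have := Nat.mul_add_lt_mul hxy hk'; omega

namespace ProperSubdivision

variable {α β : Type*} {F : SimpleGraph α} {H : SimpleGraph β} (S : ProperSubdivision F H)

open Walk

lemma getVert_notMem_range {u v : α} (h : F.Adj u v) {k : ℕ} (hk₀ : 0 < k)
    (hkL : k < (S.p u v h).length) : (S.p u v h).getVert k ∉ Set.range S.f := by
  rintro ⟨c, hc⟩
  have hp := S.isPath u v h
  rcases S.eq_or_eq_of_mem_support u v h c (hc ▸ getVert_mem_support _ _) with rfl | rfl
  · exact hk₀.ne' ((hp.getVert_eq_start_iff hkL.le).1 hc.symm)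
  · exact hkL.ne ((hp.getVert_eq_end_iff hkL.le).1 hc.symm)

lemma sym2_eq_of_mem_support {u v u' v' : α} {h : F.Adj u v} {h' : F.Adj u' v'} {w : β}
    (hw : w ∉ Set.range S.f) (hm : w ∈ (S.p u v h).support)
    (hm' : w ∈ (S.p u' v' h').support) : s(u, v) = s(u', v') := by
  by_contra hne
  exact hw (S.mem_range_of_mem_support u v u' v' h h' hne w hm hm')

variable [Fintype β]

noncomputable def rank (a : α) : ℕ := Fintype.equivFin β (S.f a)

lemma rank_lt (a : α) : S.rank a < Fintype.card β := (Fintype.equivFin β (S.f a)).isLt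

lemma rank_injective : Function.Injective S.rank :=
  fun _ _ h => S.injective ((Fintype.equivFin β).injective (Fin.ext h))

lemma exists_oriented {u v : α} (h : F.Adj u v) :
    ∃ a b, ∃ h' : F.Adj a b, S.rank a < S.rank b ∧
      (S.p u v h).support ⊆ (S.p a b h').support ∧
      (S.p u v h).edges ⊆ (S.p a b h').edges := by
  rcases lt_or_gt_of_ne (S.rank_injective.ne h.ne) with hlt | hgt
  · exact ⟨u, v, h, hlt, List.Subset.refl _, List.Subset.refl _⟩
  · refine ⟨v, u, h.symm, hgt, fun x hx => ?_, fun x hx => ?_⟩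
    · rwa [S.reverse u v h, support_reverse, List.mem_reverse]
    · rwa [S.reverse u v h, edges_reverse, List.mem_reverse]

variable {S}

lemma eq_of_getVert_eq {a b a' b' : α} {h : F.Adj a b} {h' : F.Adj a' b'}
    (hab : S.rank a < S.rank b) (hab' : S.rank a' < S.rank b') {k k' : ℕ} (hk₀ : 0 < k)
    (hkL : k < (S.p a b h).length) (hk' : k' ≤ (S.p a' b' h').length)
    (heq : (S.p a b h).getVert k = (S.p a' b' h').getVert k') : a = a' ∧ b = b' ∧ k = k' := by
  have hw := S.getVert_notMem_range h hk₀ hkL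
  have hm' : (S.p a b h).getVert k ∈ (S.p a' b' h').support := heq ▸ getVert_mem_support _ _
  obtain ⟨rfl, rfl⟩ : a = a' ∧ b = b' := by
    rcases Sym2.eq_iff.1 (S.sym2_eq_of_mem_support hw (getVert_mem_support _ _) hm') with
      hs | ⟨rfl, rfl⟩
    · exact hs
    · omega
  exact ⟨rfl, rfl, (S.isPath a b h).getVert_injOn hkL.le hk' heq⟩

variable (S)

lemma mem_range_or_exists_getVert (w : β) : w ∈ Set.range S.f ∨
    ∃ a b, ∃ h : F.Adj a b, S.rank a < S.rank b ∧
      ∃ k, 0 < k ∧ k < (S.p a b h).length ∧ (S.p a b h).getVert k = w := by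
  refine or_iff_not_imp_left.2 fun hw => ?_
  obtain ⟨u, v, h, hm⟩ := (S.mem_range_or_mem_support w).resolve_left hw
  obtain ⟨a, b, h', hab, hsupp, -⟩ := S.exists_oriented h
  obtain ⟨k, rfl, hk⟩ := mem_support_iff_exists_getVert.1 (hsupp hm)
  refine ⟨a, b, h', hab, k, Nat.pos_of_ne_zero ?_, lt_of_le_of_ne hk ?_, rfl⟩
  · rintro rfl
    exact hw ⟨a, (getVert_zero _).symm⟩
  · rintro rfl
    exact hw ⟨b, (getVert_length _).symm⟩

lemma exists_getVert_of_adj {x y : β} (hxy : H.Adj x y) :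
    ∃ a b, ∃ h : F.Adj a b, S.rank a < S.rank b ∧ ∃ k < (S.p a b h).length,
      s((S.p a b h).getVert k, (S.p a b h).getVert (k + 1)) = s(x, y) := by
  obtain ⟨u, v, h, he⟩ := S.exists_mem_edges s(x, y) hxy
  obtain ⟨a, b, h', hab, -, hedges⟩ := S.exists_oriented h
  exact ⟨a, b, h', hab, (mk_mem_edges_iff_exists _).1 (hedges he)⟩

def IsTime (w : β) (n : ℕ) : Prop :=
  (∃ a, S.f a = w ∧ n = S.rank a * Fintype.card β) ∨
    ∃ a b, ∃ h : F.Adj a b, S.rank a < S.rank b ∧ ∃ k, 0 < k ∧ k < (S.p a b h).length ∧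
      (S.p a b h).getVert k = w ∧ n = S.rank a * Fintype.card β + k

lemma exists_isTime (w : β) : ∃ n, S.IsTime w n := by
  rcases S.mem_range_or_exists_getVert w with ⟨a, rfl⟩ | ⟨a, b, h, hab, k, hk₀, hkL, rfl⟩
  · exact ⟨_, Or.inl ⟨a, rfl, rfl⟩⟩
  · exact ⟨_, Or.inr ⟨a, b, h, hab, k, hk₀, hkL, rfl, rfl⟩⟩

lemma IsTime.unique {S : ProperSubdivision F H} {w : β} {n n' : ℕ} (hn : S.IsTime w n)
    (hn' : S.IsTime w n') : n = n' := by
  rcases hn with ⟨a, rfl, rfl⟩ | ⟨a, b, h, hab, k, hk₀, hkL, rfl, rfl⟩ <;>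
    rcases hn' with ⟨a', ha', rfl⟩ | ⟨a', b', h', hab', k', hk₀', hkL', hw', rfl⟩
  · rw [S.injective ha']
  · exact absurd ⟨a, hw'.symm⟩ (S.getVert_notMem_range h' hk₀' hkL')
  · exact absurd ⟨a', ha'⟩ (S.getVert_notMem_range h hk₀ hkL)
  · obtain ⟨rfl, -, rfl⟩ := eq_of_getVert_eq hab hab' hk₀ hkL hkL'.le hw'.symm
    rfl

noncomputable def time (w : β) : ℕ := (S.exists_isTime w).choose

lemma isTime_time (w : β) : S.IsTime w (S.time w) := (S.exists_isTime w).choose_spec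

lemma time_eq_of_isTime {w : β} {n : ℕ} (hn : S.IsTime w n) : S.time w = n :=
  (S.isTime_time w).unique hn

lemma time_f (a : α) : S.time (S.f a) = S.rank a * Fintype.card β :=
  S.time_eq_of_isTime (Or.inl ⟨a, rfl, rfl⟩)

lemma time_getVert {a b : α} {h : F.Adj a b} (hab : S.rank a < S.rank b) {k : ℕ}
    (hkL : k < (S.p a b h).length) :
    S.time ((S.p a b h).getVert k) = S.rank a * Fintype.card β + k := by
  rcases Nat.eq_zero_or_pos k with rfl | hk₀
  · rw [getVert_zero, time_f, add_zero]
  · exact S.time_eq_of_isTime (Or.inr ⟨a, b, h, hab, k, hk₀, hkL, rfl, rfl⟩)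

lemma time_lt (w : β) : S.time w < Fintype.card β * Fintype.card β := by
  rcases S.isTime_time w with ⟨a, -, ht⟩ | ⟨a, b, h, -, k, -, hkL, -, ht⟩ <;> rw [ht]
  · exact Nat.mul_lt_mul_of_pos_right (S.rank_lt a) (Fintype.card_pos_iff.2 ⟨w⟩)
  · exact Nat.mul_add_lt_mul (S.rank_lt a) (hkL.trans (S.isPath a b h).length_lt)

lemma time_getVert_lt_succ {a b : α} {h : F.Adj a b} (hab : S.rank a < S.rank b) {k : ℕ}
    (hkL : k < (S.p a b h).length) :
    S.time ((S.p a b h).getVert k) < S.time ((S.p a b h).getVert (k + 1)) := by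
  rw [S.time_getVert hab hkL]
  rcases (show k + 1 ≤ _ from hkL).lt_or_eq with hk | hk
  · rw [S.time_getVert hab hk]
    omega
  · rw [hk, getVert_length, time_f]
    exact Nat.mul_add_lt_mul hab (hkL.trans (S.isPath a b h).length_lt)

lemma time_ne_of_adj {x y : β} (hxy : H.Adj x y) : S.time x ≠ S.time y := by
  obtain ⟨a, b, h, hab, k, hkL, he⟩ := S.exists_getVert_of_adj hxy
  have := S.time_getVert_lt_succ hab hkL
  rcases Sym2.eq_iff.1 he with ⟨rfl, rfl⟩ | ⟨rfl, rfl⟩ <;> omega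

lemma exists_getVert_of_adj_of_time_lt {x y : β} (hxy : H.Adj x y)
    (ht : S.time x < S.time y) :
    ∃ a b, ∃ h : F.Adj a b, S.rank a < S.rank b ∧ ∃ k < (S.p a b h).length,
      (S.p a b h).getVert k = x ∧ (S.p a b h).getVert (k + 1) = y := by
  obtain ⟨a, b, h, hab, k, hkL, he⟩ := S.exists_getVert_of_adj hxy
  rcases Sym2.eq_iff.1 he with ⟨hx, hy⟩ | ⟨hy, hx⟩
  · exact ⟨a, b, h, hab, k, hkL, hx, hy⟩
  · have := S.time_getVert_lt_succ hab hkL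
    rw [hx, hy] at this
    omega

lemma time_eq_of_adj_of_time_lt {x y y' : β} (hy : H.Adj x y) (hy' : H.Adj x y')
    (ht : S.time x < S.time y) (ht' : S.time x < S.time y') : S.time y = S.time y' := by
  obtain ⟨a, b, h, hab, k, hkL, rfl, rfl⟩ := S.exists_getVert_of_adj_of_time_lt hy ht
  obtain ⟨a', b', h', hab', k', hkL', hx, rfl⟩ := S.exists_getVert_of_adj_of_time_lt hy' ht'
  rcases Nat.eq_zero_or_pos k' with rfl | hk₀'
  · rcases Nat.eq_zero_or_pos k with rfl | hk₀
    · obtain rfl := S.injective (by simpa only [getVert_zero] using hx)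
      have h₂ := S.two_le_length _ _ h
      have h₂' := S.two_le_length _ _ h'
      rw [S.time_getVert hab (by omega), S.time_getVert hab' (by omega)]
    · exact absurd ⟨a', by simpa only [getVert_zero] using hx⟩
        (S.getVert_notMem_range h hk₀ hkL)
  · obtain ⟨rfl, rfl, rfl⟩ := eq_of_getVert_eq hab' hab hk₀' hkL' hkL.le hx
    rfl

lemma isOBD_time_fibers {ℓ : ℕ} (hℓ : ∀ w, S.time w < ℓ) :
    IsOBD H (fun i : Fin ℓ => {w | S.time w = i}) :=
  isOBD_fibers hℓ S.time_ne_of_adj S.time_eq_of_adj_of_time_lt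

lemma eq_f_of_time_eq {a : α} {w : β} (hw : S.time w = S.rank a * Fintype.card β) :
    w = S.f a := by
  have hC : 0 < Fintype.card β := Fintype.card_pos_iff.2 ⟨w⟩
  rcases S.isTime_time w with ⟨a', rfl, ht⟩ | ⟨a', b', h', -, k', hk₀', hkL', rfl, ht⟩
  · rw [S.rank_injective (Nat.eq_of_mul_eq_mul_right hC (ht.symm.trans hw))]
  · have := Nat.mul_add_inj (hkL'.trans (S.isPath a' b' h').length_lt) hC (ht.symm.trans hw)
    omega

lemma exists_getVert_of_time_eq {a : α} {k : ℕ} (hk₀ : 0 < k) (hkC : k < Fintype.card β)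
    {w : β} (hw : S.time w = S.rank a * Fintype.card β + k) :
    ∃ b, ∃ h : F.Adj a b, S.rank a < S.rank b ∧ k < (S.p a b h).length ∧
      (S.p a b h).getVert k = w := by
  rcases S.isTime_time w with ⟨a', rfl, ht⟩ | ⟨a', b', h', hab', k', -, hkL', rfl, ht⟩
  · have := Nat.mul_add_inj (x := S.rank a') (hk₀.trans hkC) hkC (ht.symm.trans hw)
    omega
  · obtain ⟨hr, rfl⟩ :=
      Nat.mul_add_inj (hkL'.trans (S.isPath a' b' h').length_lt) hkC (ht.symm.trans hw)
    obtain rfl := S.rank_injective hr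
    exact ⟨b', h', hab', hkL', rfl⟩

variable [DecidableRel H.Adj]

lemma degree_getVert_le_two {a b : α} {h : F.Adj a b} (hab : S.rank a < S.rank b) {k : ℕ}
    (hk₀ : 0 < k) (hkL : k < (S.p a b h).length) : H.degree ((S.p a b h).getVert k) ≤ 2 := by
  classical
  have hsub : H.neighborFinset ((S.p a b h).getVert k) ⊆
      {(S.p a b h).getVert (k - 1), (S.p a b h).getVert (k + 1)} := by
    intro z hz
    obtain ⟨a', b', h', hab', j, hj, he⟩ :=
      S.exists_getVert_of_adj ((H.mem_neighborFinset _ _).1 hz)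
    rcases Sym2.eq_iff.1 he with ⟨hw, rfl⟩ | ⟨rfl, hw⟩
    · obtain ⟨rfl, rfl, rfl⟩ := eq_of_getVert_eq hab hab' hk₀ hkL hj.le hw.symm
      simp
    · obtain ⟨rfl, rfl, rfl⟩ := eq_of_getVert_eq hab hab' hk₀ hkL hj hw.symm
      simp
  rw [← card_neighborFinset_eq_degree]
  exact (Finset.card_le_card hsub).trans Finset.card_le_two

/-- A vertex of this fibre is the `k`-th vertex of an outgoing path of `f a`, and is determined
by the first internal vertex of that path, a neighbour of `f a`. -/
lemma ncard_time_eq_le_degree {a : α} {k : ℕ} (hk₀ : 0 < k) (hkC : k < Fintype.card β) :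
    {w | S.time w = S.rank a * Fintype.card β + k}.ncard ≤ H.degree (S.f a) := by
  classical
  rw [Set.ncard_eq_toFinset_card', Set.toFinset_ofPred, ← card_neighborFinset_eq_degree]
  refine Finset.card_le_card_of_forall_subsingleton
    (fun w z => ∃ b, ∃ h : F.Adj a b, S.rank a < S.rank b ∧ k < (S.p a b h).length ∧
      (S.p a b h).getVert k = w ∧ (S.p a b h).getVert 1 = z) (fun w hw => ?_) ?_
  · obtain ⟨b, h, hab, hkL, rfl⟩ :=
      S.exists_getVert_of_time_eq hk₀ hkC (Finset.mem_filter.1 hw).2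
    refine ⟨(S.p a b h).getVert 1, ?_, b, h, hab, hkL, rfl, rfl⟩
    simpa using (S.p a b h).adj_getVert_succ (i := 0) (by omega)
  · rintro z - w₁ ⟨-, b, h, hab, hkL, rfl, rfl⟩ w₂ ⟨-, b', h', hab', hkL', rfl, hz⟩
    have h₂ := S.two_le_length _ _ h
    have h₂' := S.two_le_length _ _ h'
    obtain ⟨-, rfl, -⟩ := eq_of_getVert_eq hab hab' one_pos (by omega) (by omega) hz.symm
    rfl

lemma ncard_obdEdges_time_fibers_le {ℓ : ℕ} (hℓ : ∀ w, S.time w < ℓ) (i : Fin ℓ) :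
    (obdEdges H (fun i : Fin ℓ => {w | S.time w = i}) i).ncard ≤ 2 * H.maxDegree := by
  have hP := S.isOBD_time_fibers hℓ
  rcases Set.eq_empty_or_nonempty {w | S.time w = i} with hi | ⟨w₀, hw₀⟩
  · have := hP.ncard_obdEdges_le i (d := 0) (by simp [hi])
    omega
  rcases S.isTime_time w₀ with ⟨a, rfl, ht⟩ | ⟨a, b, h, hab, k, hk₀, hkL, rfl, ht⟩
  · have hclass : {w | S.time w = i} = {S.f a} :=
      Set.eq_singleton_iff_unique_mem.2
        ⟨hw₀, fun w hw => S.eq_f_of_time_eq (hw.trans (hw₀.symm.trans ht))⟩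
    calc (obdEdges H _ i).ncard ≤ {w | S.time w = i}.ncard * H.maxDegree :=
          hP.ncard_obdEdges_le i fun v _ => H.degree_le_maxDegree v
      _ ≤ 2 * H.maxDegree := by rw [hclass, Set.ncard_singleton]; omega
  · have hkC := hkL.trans (S.isPath a b h).length_lt
    have hi : (i : ℕ) = S.rank a * Fintype.card β + k := hw₀.symm.trans ht
    calc (obdEdges H _ i).ncard ≤ {w | S.time w = i}.ncard * 2 :=
          hP.ncard_obdEdges_le i fun v hv => by
            obtain ⟨b', h', hab', hkL', rfl⟩ :=
              S.exists_getVert_of_time_eq hk₀ hkC (hv.trans hi)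
            exact S.degree_getVert_le_two hab' hk₀ hkL'
      _ ≤ H.degree (S.f a) * 2 := by
          rw [hi]
          exact Nat.mul_le_mul_right 2 (S.ncard_time_eq_le_degree hk₀ hkC)
      _ ≤ 2 * H.maxDegree := by have := H.degree_le_maxDegree (S.f a); omega

end ProperSubdivision

/-- If `H` is a proper subdivision of a finite simple graph `F` (every edge of `F` is replaced
by a path with at least one internal vertex), then `H` has an ordered bipartite decomposition
of width at most `2 · Δ(H)`. -/
theorem subdivision_obd {α β : Type*} [Fintype β] (F : SimpleGraph α) (H : SimpleGraph β)
    [DecidableRel H.Adj] (hsub : IsProperSubdivision F H) :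
    ∃ (ℓ : ℕ) (P : Fin ℓ → Set β),
      IsOBD H P ∧ ∀ i, (obdEdges H P i).ncard ≤ 2 * H.maxDegree := by
  obtain ⟨S⟩ := hsub.nonempty
  exact ⟨_, _, S.isOBD_time_fibers S.time_lt, S.ncard_obdEdges_time_fibers_le S.time_lt⟩
end

section
/- Let H be a finite simple graph of girth at least 16 that admits a 3-thread partition. Then H has an ordered bipartite decomposition of width at most 2·Δ(H), where Δ(H) is the maximum degree of H. -/
open SimpleGraph

/-- A 3-thread partition of `H`: a partition `X 0, …, X (c-1)` of the vertex set such that,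
writing `H⁽ⁱ⁾` for the subgraph of `H` induced by the vertices not in `X 0 ∪ ⋯ ∪ X (i-1)`,
each `X i` is either a single vertex of degree 0 or 1 in `H⁽ⁱ⁾`, or three vertices forming a
3-thread in `H⁽ⁱ⁾` (an induced path on 3 vertices, each of degree 2 in `H⁽ⁱ⁾`). -/
def IsThreeThreadPartition {V : Type*} (H : SimpleGraph V) {c : ℕ} (X : Fin c → Set V) : Prop :=
  (∀ v : V, ∃! i : Fin c, v ∈ X i) ∧
  ∀ i : Fin c,
    (∃ a : V, X i = {a} ∧
      ({u : V | (∀ j, j < i → u ∉ X j) ∧ H.Adj a u}).ncard ≤ 1) ∨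
    (∃ a b d : V, X i = {a, b, d} ∧ a ≠ b ∧ b ≠ d ∧ a ≠ d ∧
      H.Adj a b ∧ H.Adj b d ∧ ¬ H.Adj a d ∧
      ({u : V | (∀ j, j < i → u ∉ X j) ∧ H.Adj a u}).ncard = 2 ∧
      ({u : V | (∀ j, j < i → u ∉ X j) ∧ H.Adj b u}).ncard = 2 ∧
      ({u : V | (∀ j, j < i → u ∉ X j) ∧ H.Adj d u}).ncard = 2)

/-! Split each part of the 3-thread partition into two independent layers: a singleton `{a}`
becomes `∅, {a}` and a thread `a b d` becomes `{b}, {a, d}`. Listing all layers in order gives an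
ordered bipartite decomposition, since the later neighbours of `b` are exactly `a` and `d`, and
each of `a`, `d` has at most one later neighbour besides `b`. Every layer has at most two
vertices, and girth at least 6 makes its outer boundary independent (a boundary edge would close
a triangle or a 5-cycle through the layer), so every edge of `H_i` meets `V_i` and `H_i` has at
most `2 Δ(H)` edges. -/

section

variable {V : Type*} {H : SimpleGraph V}

lemma not_adj_of_four_le_egirth (hg : 4 ≤ H.egirth) {x y z : V} (hxy : H.Adj x y)
    (hyz : H.Adj y z) : ¬ H.Adj z x := by
  intro hzx
  have hc : (Walk.cons hxy (Walk.cons hyz (Walk.cons hzx Walk.nil))).IsCycle := by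
    simp only [Walk.cons_isCycle_iff, Walk.cons_isPath_iff, Walk.isPath_iff_nil, Walk.nil_nil,
      Walk.edges_cons, Walk.edges_nil, Walk.support_cons, Walk.support_nil, List.mem_cons,
      Sym2.eq_iff, List.not_mem_nil]
    grind [Adj.ne]
  have := hg.trans (egirth_le_length hc)
  norm_num at this

lemma not_adj_of_six_le_egirth (hg : 6 ≤ H.egirth) {x₁ x₂ x₃ x₄ x₅ : V} (h₁₂ : H.Adj x₁ x₂)
    (h₂₃ : H.Adj x₂ x₃) (h₃₄ : H.Adj x₃ x₄) (h₄₅ : H.Adj x₄ x₅) (n₁₃ : x₁ ≠ x₃) (n₁₄ : x₁ ≠ x₄)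
    (n₂₄ : x₂ ≠ x₄) (n₂₅ : x₂ ≠ x₅) (n₃₅ : x₃ ≠ x₅) : ¬ H.Adj x₅ x₁ := by
  intro h₅₁
  have hc : (Walk.cons h₁₂ (Walk.cons h₂₃ (Walk.cons h₃₄ (Walk.cons h₄₅
      (Walk.cons h₅₁ Walk.nil))))).IsCycle := by
    simp only [Walk.cons_isCycle_iff, Walk.cons_isPath_iff, Walk.isPath_iff_nil, Walk.nil_nil,
      Walk.edges_cons, Walk.edges_nil, Walk.support_cons, Walk.support_nil, List.mem_cons,
      Sym2.eq_iff, List.not_mem_nil]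
    grind [Adj.ne]
  have := hg.trans (egirth_le_length hc)
  norm_num at this

def vertexBoundary (H : SimpleGraph V) (S : Set V) : Set V :=
  {u | u ∉ S ∧ ∃ v ∈ S, H.Adj u v}

lemma isIndepSet_vertexBoundary_empty (H : SimpleGraph V) :
    H.IsIndepSet (vertexBoundary H ∅) := by
  simp [vertexBoundary]

lemma isIndepSet_vertexBoundary_singleton (hg : 4 ≤ H.egirth) (a : V) :
    H.IsIndepSet (vertexBoundary H {a}) := by
  rintro u ⟨-, _, rfl, hua⟩ w ⟨-, _, rfl, hwa⟩ - huw
  exact not_adj_of_four_le_egirth hg huw hwa hua.symm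

lemma not_adj_of_adj_ends_of_six_le_egirth (hg : 6 ≤ H.egirth) {a b d u w : V} (had : a ≠ d)
    (hab : H.Adj a b) (hbd : H.Adj b d) (hua : H.Adj u a) (hwd : H.Adj w d)
    (hud : u ≠ d) (hwa : w ≠ a) : ¬ H.Adj u w := by
  have hg4 : 4 ≤ H.egirth := le_trans (by norm_num) hg
  intro huw
  by_cases hub : u = b
  · subst hub
    exact not_adj_of_four_le_egirth hg4 huw hwd hbd.symm
  by_cases hwb : w = b
  · subst hwb
    exact not_adj_of_four_le_egirth hg4 hua.symm huw hab.symm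
  exact not_adj_of_six_le_egirth hg hab hbd hwd.symm huw.symm had (Ne.symm hwa) (Ne.symm hwb)
    (Ne.symm hub) (Ne.symm hud) hua

lemma isIndepSet_vertexBoundary_pair (hg : 6 ≤ H.egirth) {a b d : V} (had : a ≠ d)
    (hab : H.Adj a b) (hbd : H.Adj b d) : H.IsIndepSet (vertexBoundary H {a, d}) := by
  have hg4 : 4 ≤ H.egirth := le_trans (by norm_num) hg
  rintro u ⟨hu, x, hx, hux⟩ w ⟨hw, y, hy, hwy⟩ - huw
  simp only [Set.mem_insert_iff, Set.mem_singleton_iff, not_or] at hu hw hx hy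
  rcases hx with rfl | rfl <;> rcases hy with rfl | rfl
  · exact not_adj_of_four_le_egirth hg4 huw hwy hux.symm
  · exact not_adj_of_adj_ends_of_six_le_egirth hg had hab hbd hux hwy hu.2 hw.1 huw
  · exact not_adj_of_adj_ends_of_six_le_egirth hg had.symm hbd.symm hab.symm hux hwy hu.1 hw.2
      huw
  · exact not_adj_of_four_le_egirth hg4 huw hwy hux.symm

lemma exists_mem_of_mem_obdEdges {ℓ : ℕ} {P : Fin ℓ → Set V} {k : Fin ℓ}
    (hk : H.IsIndepSet (vertexBoundary H (P k))) {e : Sym2 V} (he : e ∈ obdEdges H P k) :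
    ∃ v ∈ P k, v ∈ e := by
  induction e using Sym2.ind with
  | _ x y =>
    obtain ⟨hxy, hmem⟩ := he
    rw [mem_edgeSet] at hxy
    by_contra! hout
    have hbdry : ∀ z ∈ s(x, y), z ∈ vertexBoundary H (P k) := fun z hz =>
      have hzP : z ∉ P k := fun h => hout z h hz
      ⟨hzP, ((hmem z hz).resolve_right hzP).1⟩
    exact hk (hbdry x (Sym2.mem_mk_left x y)) (hbdry y (Sym2.mem_mk_right x y)) hxy.ne hxy

lemma ncard_obdEdges_le [Fintype V] [DecidableRel H.Adj] {ℓ : ℕ} {P : Fin ℓ → Set V}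
    {k : Fin ℓ} (hk : H.IsIndepSet (vertexBoundary H (P k))) :
    (obdEdges H P k).ncard ≤ (P k).ncard * H.maxDegree := by
  classical
  have hsub : obdEdges H P k ⊆ ↑((P k).toFinset.biUnion fun v => H.incidenceFinset v) := by
    intro e he
    obtain ⟨v, hv, hve⟩ := exists_mem_of_mem_obdEdges hk he
    simp only [Finset.coe_biUnion, Set.coe_toFinset, Set.mem_iUnion, exists_prop]
    exact ⟨v, hv, by simpa using ⟨he.1, hve⟩⟩
  calc (obdEdges H P k).ncard ≤ ((P k).toFinset.biUnion fun v => H.incidenceFinset v).card := by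
        rw [← Set.ncard_coe_finset]; exact Set.ncard_le_ncard hsub
    _ ≤ ∑ v ∈ (P k).toFinset, (H.incidenceFinset v).card := Finset.card_biUnion_le
    _ ≤ (P k).toFinset.card • H.maxDegree := Finset.sum_le_card_nsmul _ _ _ fun v _ => by
        simpa using H.degree_le_maxDegree v
    _ = (P k).ncard * H.maxDegree := by rw [smul_eq_mul, Set.ncard_eq_toFinset_card']

lemma isOBD_colorClass {ℓ : ℕ} (C : H.Coloring (Fin ℓ))
    (hC : ∀ v, ∃ j, ∀ u, H.Adj v u → C u < C v ∨ C u = j) : IsOBD H C.colorClass := by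
  refine ⟨fun v => ⟨C v, rfl, fun k hk => hk.symm⟩,
    fun k u hu v hv huv => C.valid huv (hu.trans hv.symm), ?_⟩
  rintro k v rfl
  obtain ⟨j, hj⟩ := hC v
  exact ⟨j, fun u hvu => (hj u hvu).imp (fun h => ⟨C u, h, rfl⟩) id⟩

lemma exists_isOBD_of_coloring {α : Type*} [LinearOrder α] [Fintype α] (C : H.Coloring α)
    (hC : ∀ v, ∃ a, ∀ u, H.Adj v u → C u < C v ∨ C u = a) :
    ∃ (ℓ : ℕ) (P : Fin ℓ → Set V), IsOBD H P ∧ ∀ k, ∃ a, P k = C.colorClass a := by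
  let e := (Fintype.orderIsoFinOfCardEq α rfl).symm
  let C' : H.Coloring (Fin (Fintype.card α)) :=
    Coloring.mk (fun v => e (C v)) fun h => e.injective.ne (C.valid h)
  refine ⟨_, C'.colorClass, isOBD_colorClass C' fun v => ?_, fun k => ⟨e.symm k, ?_⟩⟩
  · obtain ⟨a, ha⟩ := hC v
    exact ⟨e a, fun u hvu => (ha u hvu).imp e.lt_iff_lt.mpr (congrArg e)⟩
  · ext v
    exact e.eq_symm_apply.symm

/-- The neighbourhood of `v` in `H⁽ⁱ⁾`. -/
def laterNeighbors (H : SimpleGraph V) {c : ℕ} (X : Fin c → Set V) (i : Fin c) (v : V) :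
    Set V :=
  {u | (∀ j, j < i → u ∉ X j) ∧ H.Adj v u}

/-- A split of the part `X i` into two independent layers which, placed consecutively (`S₀`
first), satisfy condition (3) of an ordered bipartite decomposition. -/
structure IsLayerSplit (H : SimpleGraph V) {c : ℕ} (X : Fin c → Set V) (i : Fin c)
    (S₀ S₁ : Set V) : Prop where
  union_eq : S₀ ∪ S₁ = X i
  disjoint : Disjoint S₀ S₁
  isIndepSet₀ : H.IsIndepSet S₀
  isIndepSet₁ : H.IsIndepSet S₁
  laterNeighbors_subset₀ : ∀ v ∈ S₀, laterNeighbors H X i v ⊆ S₁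
  laterNeighbors_subset₁ : ∀ v ∈ S₁, ∃ w, laterNeighbors H X i v ⊆ insert w S₀

lemma Set.exists_subset_insert_of_ncard_eq_two {α : Type*} {s : Set α} {b : α}
    (hs : s.ncard = 2) (hb : b ∈ s) : ∃ w, s ⊆ insert w {b} := by
  obtain ⟨x, y, -, rfl⟩ := Set.ncard_eq_two.mp hs
  rcases hb with rfl | rfl
  · exact ⟨y, (Set.pair_comm _ _).subset⟩
  · exact ⟨x, subset_rfl⟩

lemma isLayerSplit_singleton [Finite V] {c : ℕ} {X : Fin c → Set V} {i : Fin c} {a : V}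
    (hXi : X i = {a}) (ha : (laterNeighbors H X i a).ncard ≤ 1) : IsLayerSplit H X i ∅ {a} where
  union_eq := by rw [hXi, Set.empty_union]
  disjoint := Set.empty_disjoint _
  isIndepSet₀ := Set.pairwise_empty _
  isIndepSet₁ := Set.pairwise_singleton _ _
  laterNeighbors_subset₀ := fun _ h => h.elim
  laterNeighbors_subset₁ := by
    rintro v rfl
    have : Nonempty V := ⟨v⟩
    obtain ⟨w, hw⟩ := (Set.ncard_le_one_iff_subset_singleton).mp ha
    exact ⟨w, by rwa [insert_empty_eq]⟩

lemma mem_laterNeighbors {c : ℕ} {X : Fin c → Set V} (hX : ∀ v, ∃! i, v ∈ X i) {i : Fin c}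
    {u v : V} (hu : u ∈ X i) (hvu : H.Adj v u) : u ∈ laterNeighbors H X i v :=
  ⟨fun _ hj hu' => hj.ne ((hX u).unique hu' hu), hvu⟩

lemma isLayerSplit_thread [Finite V] {c : ℕ} {X : Fin c → Set V} (hX : ∀ v, ∃! i, v ∈ X i)
    {i : Fin c} {a b d : V} (hXi : X i = {a, b, d}) (had : a ≠ d) (hab : H.Adj a b)
    (hbd : H.Adj b d) (hnad : ¬ H.Adj a d) (ha : (laterNeighbors H X i a).ncard = 2)
    (hb : (laterNeighbors H X i b).ncard = 2) (hd : (laterNeighbors H X i d).ncard = 2) :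
    IsLayerSplit H X i {b} {a, d} where
  union_eq := by rw [hXi, Set.singleton_union, Set.insert_comm]
  disjoint := Set.disjoint_singleton_left.mpr (by simp [hab.ne', hbd.ne])
  isIndepSet₀ := Set.pairwise_singleton _ _
  isIndepSet₁ := Set.pairwise_pair.mpr fun _ => ⟨hnad, fun h => hnad h.symm⟩
  laterNeighbors_subset₀ := by
    rintro v rfl
    have hsub : {a, d} ⊆ laterNeighbors H X i v := by
      rintro u (rfl | rfl)
      · exact mem_laterNeighbors hX (by simp [hXi]) hab.symm
      · exact mem_laterNeighbors hX (by simp [hXi]) hbd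
    exact (Set.eq_of_subset_of_ncard_le hsub (by rw [hb, Set.ncard_pair had])).ge
  laterNeighbors_subset₁ := by
    rintro v (rfl | rfl)
    · exact Set.exists_subset_insert_of_ncard_eq_two ha
        (mem_laterNeighbors hX (by simp [hXi]) hab)
    · exact Set.exists_subset_insert_of_ncard_eq_two hd
        (mem_laterNeighbors hX (by simp [hXi]) hbd.symm)

lemma IsThreeThreadPartition.exists_isLayerSplit [Finite V] (hg : 6 ≤ H.egirth) {c : ℕ}
    {X : Fin c → Set V} (hX : IsThreeThreadPartition H X) (i : Fin c) :
    ∃ S₀ S₁, IsLayerSplit H X i S₀ S₁ ∧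
      ∀ S ∈ ({S₀, S₁} : Set (Set V)), S.ncard ≤ 2 ∧ H.IsIndepSet (vertexBoundary H S) := by
  have hg4 : 4 ≤ H.egirth := le_trans (by norm_num) hg
  rcases hX.2 i with ⟨a, hXi, ha⟩ | ⟨a, b, d, hXi, -, -, had, hab, hbd, hnad, ha, hb, hd⟩
  · refine ⟨∅, {a}, isLayerSplit_singleton hXi ha, ?_⟩
    rintro S (rfl | rfl)
    · exact ⟨by simp, isIndepSet_vertexBoundary_empty H⟩
    · exact ⟨by simp, isIndepSet_vertexBoundary_singleton hg4 a⟩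
  · refine ⟨{b}, {a, d}, isLayerSplit_thread hX.1 hXi had hab hbd hnad ha hb hd, ?_⟩
    rintro S (rfl | rfl)
    · exact ⟨by simp, isIndepSet_vertexBoundary_singleton hg4 b⟩
    · exact ⟨(Set.ncard_pair had).le, isIndepSet_vertexBoundary_pair hg had hab hbd⟩

section LayerRank

variable {c : ℕ} {X S₀ S₁ : Fin c → Set V} {t : V → Fin c}

open Classical in
noncomputable def layerRank (t : V → Fin c) (S₁ : Fin c → Set V) (v : V) : Fin c ×ₗ Bool :=
  toLex (t v, decide (v ∈ S₁ (t v)))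

lemma layerRank_lt_of_lt {u v : V} (h : t u < t v) : layerRank t S₁ u < layerRank t S₁ v :=
  Prod.Lex.toLex_lt_toLex.mpr (Or.inl h)

lemma lt_or_mem_laterNeighbors (ht : ∀ v i, v ∈ X i ↔ t v = i) {u v : V} (hvu : H.Adj v u) :
    t u < t v ∨ u ∈ laterNeighbors H X (t v) v :=
  or_iff_not_imp_left.mpr fun hge => ⟨fun j hj hu => hge ((ht u j).mp hu ▸ hj), hvu⟩

lemma layerRank_eq_false_iff (ht : ∀ v i, v ∈ X i ↔ t v = i)
    (hS : ∀ i, IsLayerSplit H X i (S₀ i) (S₁ i)) {i : Fin c} {v : V} :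
    layerRank t S₁ v = toLex (i, false) ↔ v ∈ S₀ i := by
  simp only [layerRank, toLex_inj, Prod.mk.injEq, decide_eq_false_iff_not]
  constructor
  · rintro ⟨rfl, hv₁⟩
    have hv : v ∈ S₀ (t v) ∪ S₁ (t v) := (hS _).union_eq ▸ (ht v _).mpr rfl
    exact hv.resolve_right hv₁
  · intro hv
    obtain rfl : t v = i := (ht v i).mp ((hS i).union_eq ▸ Or.inl hv)
    exact ⟨rfl, (hS _).disjoint.notMem_of_mem_left hv⟩

lemma layerRank_eq_true_iff (ht : ∀ v i, v ∈ X i ↔ t v = i)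
    (hS : ∀ i, IsLayerSplit H X i (S₀ i) (S₁ i)) {i : Fin c} {v : V} :
    layerRank t S₁ v = toLex (i, true) ↔ v ∈ S₁ i := by
  simp only [layerRank, toLex_inj, Prod.mk.injEq, decide_eq_true_iff]
  constructor
  · rintro ⟨rfl, hv₁⟩
    exact hv₁
  · intro hv
    obtain rfl : t v = i := (ht v i).mp ((hS i).union_eq ▸ Or.inr hv)
    exact ⟨rfl, hv⟩

end LayerRank

theorem exists_isOBD_of_isLayerSplit {c : ℕ} {X S₀ S₁ : Fin c → Set V}
    (hX : ∀ v, ∃! i, v ∈ X i) (hS : ∀ i, IsLayerSplit H X i (S₀ i) (S₁ i)) :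
    ∃ (ℓ : ℕ) (P : Fin ℓ → Set V), IsOBD H P ∧
      ∀ k, ∃ i, P k ∈ ({S₀ i, S₁ i} : Set (Set V)) := by
  choose t ht using fun v => (hX v).exists
  have hmem : ∀ v i, v ∈ X i ↔ t v = i :=
    fun v i => ⟨fun h => (hX v).unique (ht v) h, fun h => h ▸ ht v⟩
  have hr₀ : ∀ {i v}, layerRank t S₁ v = toLex (i, false) ↔ v ∈ S₀ i :=
    layerRank_eq_false_iff hmem hS
  have hr₁ : ∀ {i v}, layerRank t S₁ v = toLex (i, true) ↔ v ∈ S₁ i :=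
    layerRank_eq_true_iff hmem hS
  have hlayer : ∀ v, v ∈ S₀ (t v) ∨ v ∈ S₁ (t v) :=
    fun v => ((hS (t v)).union_eq ▸ ht v : v ∈ S₀ (t v) ∪ S₁ (t v))
  let C : H.Coloring (Fin c ×ₗ Bool) := Coloring.mk (layerRank t S₁) fun {u v} huv hr => by
    rcases hlayer v with hv | hv
    · exact (hS _).isIndepSet₀ (hr₀.mp (hr.trans (hr₀.mpr hv))) hv huv.ne huv
    · exact (hS _).isIndepSet₁ (hr₁.mp (hr.trans (hr₁.mpr hv))) hv huv.ne huv
  obtain ⟨ℓ, P, hP, hPC⟩ := exists_isOBD_of_coloring C fun v => by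
    rcases hlayer v with hv | hv
    · refine ⟨toLex (t v, true), fun u hvu => ?_⟩
      refine (lt_or_mem_laterNeighbors hmem hvu).imp layerRank_lt_of_lt fun hu => ?_
      exact hr₁.mpr ((hS _).laterNeighbors_subset₀ v hv hu)
    · obtain ⟨w, hw⟩ := (hS _).laterNeighbors_subset₁ v hv
      refine ⟨layerRank t S₁ w, fun u hvu => ?_⟩
      rcases lt_or_mem_laterNeighbors hmem hvu with hlt | hu
      · exact Or.inl (layerRank_lt_of_lt hlt)
      rcases hw hu with rfl | hu₀
      · exact Or.inr rfl
      · left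
        show layerRank t S₁ u < layerRank t S₁ v
        rw [hr₀.mpr hu₀, hr₁.mpr hv]
        exact Prod.Lex.toLex_lt_toLex.mpr (Or.inr ⟨rfl, Bool.false_lt_true⟩)
  refine ⟨ℓ, P, hP, fun k => ?_⟩
  obtain ⟨⟨i, _ | _⟩, hk⟩ := hPC k
  · exact ⟨i, Or.inl (hk.trans (Set.ext fun v => hr₀))⟩
  · exact ⟨i, Or.inr (hk.trans (Set.ext fun v => hr₁))⟩

end

/-- A finite simple graph of girth at least 16 admitting a 3-thread partition has an ordered
bipartite decomposition of width at most `2 · Δ(H)`. -/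
theorem threadPartition_obd {V : Type*} [Fintype V] (H : SimpleGraph V) [DecidableRel H.Adj]
    (hgirth : 16 ≤ H.egirth) {c : ℕ} (X : Fin c → Set V)
    (hX : IsThreeThreadPartition H X) :
    ∃ (ℓ : ℕ) (P : Fin ℓ → Set V),
      IsOBD H P ∧ ∀ i, (obdEdges H P i).ncard ≤ 2 * H.maxDegree := by
  choose S₀ S₁ hsplit hsmall using hX.exists_isLayerSplit (le_trans (by norm_num) hgirth)
  obtain ⟨ℓ, P, hP, hPS⟩ := exists_isOBD_of_isLayerSplit hX.1 hsplit
  refine ⟨ℓ, P, hP, fun k => ?_⟩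
  obtain ⟨i, hk⟩ := hPS k
  obtain ⟨hcard, hindep⟩ := hsmall i (P k) hk
  calc (obdEdges H P k).ncard ≤ (P k).ncard * H.maxDegree := ncard_obdEdges_le hindep
    _ ≤ 2 * H.maxDegree := Nat.mul_le_mul_right _ hcard
end

section
/- Let k ≥ 2 be an integer and let H_D be a diagonal graph on V = {(i,j) : 0 ≤ i,j ≤ k−1}. Then H_D has a connected component that contains at least one vertex from every row, or a connected component that contains at least one vertex from every column. -/
/-!
Gale's proof of the Hex theorem. Surround the grid by a frame of cells whose diagonals are
chosen so that the odd frame vertices form walls along the bottom and the top and the even ones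
walls along the left and the right side. Each diagonal cuts its cell into two triangles; walk
through the triangles, crossing one cell side at a time, starting across the outer left side of
the frame cell `(-1, 0)`. The corner on the walker's left stays connected to the left wall, the
one on its right to the bottom wall. The step of the walk is injective and the starting state
has no predecessor in the frame, so the walk leaves the frame, and parity shows that it can only
leave through the right side or the top: this gives an even path from the left wall to the right
one, or an odd path from the bottom wall to the top one. Its edges away from the walls are edges
of the original graph, so it contains a path from column `0` to column `k - 1` or from row `0`
to row `k - 1`; since every edge changes the row and the column by one, the component of that
path meets every column or every row.
-/

open SimpleGraph

/-- `H` is a diagonal graph on `{(i,j) : 0 ≤ i,j ≤ k-1}`: for every `(i,j)` with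
`0 ≤ i,j ≤ k-2`, exactly one of the two diagonals `{(i,j),(i+1,j+1)}` and
`{(i,j+1),(i+1,j)}` of the corresponding 2×2 square is an edge of `H`, and `H` has no
other edges. -/
def IsDiagonalGraph (k : ℕ) (H : SimpleGraph (Fin k × Fin k)) : Prop :=
  (∀ (i j : ℕ) (hi : i + 1 < k) (hj : j + 1 < k),
    H.Adj (⟨i, by omega⟩, ⟨j, by omega⟩) (⟨i + 1, hi⟩, ⟨j + 1, hj⟩) ↔
      ¬ H.Adj (⟨i, by omega⟩, ⟨j + 1, hj⟩) (⟨i + 1, hi⟩, ⟨j, by omega⟩)) ∧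
  (∀ u v : Fin k × Fin k, H.Adj u v →
    ((u.1 : ℕ) + 1 = (v.1 : ℕ) ∨ (v.1 : ℕ) + 1 = (u.1 : ℕ)) ∧
    ((u.2 : ℕ) + 1 = (v.2 : ℕ) ∨ (v.2 : ℕ) + 1 = (u.2 : ℕ)))

namespace SimpleGraph

variable {V : Type*} {G : SimpleGraph V}

theorem Reachable.of_forall_adj {P : V → Prop} (hP : ∀ u v, G.Adj u v → P u → P v) {a b : V}
    (h : G.Reachable a b) (ha : P a) : P b := by
  obtain ⟨p⟩ := h
  induction p with
  | nil => exact ha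
  | cons hadj _ ih => exact ih (hP _ _ hadj ha)

theorem Reachable.exists_reachable_eq (φ : V → ℤ) (hφ : ∀ u v, G.Adj u v → φ v ≤ φ u + 1)
    {a b : V} (h : G.Reachable a b) {t : ℤ} (hat : φ a ≤ t) (htb : t ≤ φ b) :
    ∃ c, G.Reachable a c ∧ φ c = t := by
  obtain ⟨p⟩ := h
  induction p with
  | nil => exact ⟨_, .rfl, le_antisymm hat htb⟩
  | @cons u w _ hadj _ ih =>
    obtain hu | hu := hat.eq_or_lt
    · exact ⟨u, .rfl, hu⟩
    · obtain ⟨c, hwc, rfl⟩ := ih (by linarith [hφ _ _ hadj]) htb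
      exact ⟨c, hadj.reachable.trans hwc, rfl⟩

theorem Reachable.exists_reachable_crossing {W : Type*} {H : SimpleGraph W} (f : W ↪ V)
    (S : Set V) (π : V → ℤ) {lo hi : ℤ} (hlohi : lo < hi)
    (hf : ∀ a, lo ≤ π (f a) ∧ π (f a) ≤ hi)
    (hG : ∀ u v, G.Adj u v → u ∈ S →
      v ∈ S ∧ ((π u ≤ lo ∧ π v ≤ lo) ∨ (hi ≤ π u ∧ hi ≤ π v) ∨ (H.map f).Adj u v))
    {u v : V} (huv : G.Reachable u v) (hu : u ∈ S) (hlo : π u ≤ lo) (hhi : hi ≤ π v) :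
    ∃ a b, π (f a) = lo ∧ π (f b) = hi ∧ H.Reachable a b := by
  set Q := ∃ a b, π (f a) = lo ∧ π (f b) = hi ∧ H.Reachable a b
  -- Invariant: the walk is still below `lo`, or an `H`-path from level `lo` reaches it.
  have key := huv.of_forall_adj (P := fun w => w ∈ S ∧
    (Q ∨ π w ≤ lo ∨ ∃ r a, π (f r) = lo ∧ f a = w ∧ H.Reachable r a)) ?_ ⟨hu, .inr (.inl hlo)⟩
  · obtain ⟨-, hQ | hv | ⟨r, a, hr, rfl, hra⟩⟩ := key
    · exact hQ
    · omega
    · exact ⟨r, a, hr, le_antisymm (hf a).2 hhi, hra⟩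
  rintro w w' hadj ⟨hw, hQ | hwlo | ⟨r, a, hr, rfl, hra⟩⟩
  · exact ⟨(hG _ _ hadj hw).1, .inl hQ⟩
  · obtain ⟨hw', hlow | hhigh | hreal⟩ := hG _ _ hadj hw
    · exact ⟨hw', .inr (.inl hlow.2)⟩
    · omega
    · obtain ⟨a, b, hab, rfl, rfl⟩ := (map_adj _ _ _ _).mp hreal
      exact ⟨hw', .inr (.inr ⟨a, b, le_antisymm hwlo (hf a).1, rfl, hab.reachable⟩)⟩
  · obtain ⟨hw', hlow | hhigh | hreal⟩ := hG _ _ hadj hw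
    · exact ⟨hw', .inr (.inl hlow.2)⟩
    · exact ⟨hw', .inl ⟨r, a, hr, le_antisymm (hf a).2 hhigh.1, hra⟩⟩
    · obtain ⟨a', b, hab, ha', rfl⟩ := (map_adj _ _ _ _).mp hreal
      obtain rfl := f.injective ha'
      exact ⟨hw', .inr (.inr ⟨r, b, hr, rfl, hra.trans hab.reachable⟩)⟩

end SimpleGraph

theorem Function.Injective.exists_iterate_leaves {α : Type*} {f : α → α}
    (hf : Function.Injective f) {S : Set α} (hS : S.Finite) {a : α} (ha : a ∈ S)
    (hpre : ∀ b ∈ S, f b ≠ a) : ∃ n, (∀ m ≤ n, f^[m] a ∈ S) ∧ f^[n + 1] a ∉ S := by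
  classical
  have hex : ∃ n, f^[n + 1] a ∉ S := by
    by_contra! hin
    have hmem : ∀ n, f^[n] a ∈ S := fun n => by
      cases n with
      | zero => exact ha
      | succ n => exact hin n
    obtain ⟨m, n, hmn, heq⟩ := hS.exists_lt_map_eq_of_forall_mem hmem
    have hret : f (f^[n - m - 1] a) = a := by
      rw [← Function.iterate_succ_apply' f, show (n - m - 1).succ = n - m by omega]
      exact Function.iterate_cancel hf heq.symm
    exact hpre _ (hmem _) hret
  refine ⟨Nat.find hex, fun m hm => ?_, Nat.find_spec hex⟩
  cases m with
  | zero => exact ha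
  | succ m => exact not_not.mp (Nat.find_min hex (by omega))

namespace DiagonalWalk

inductive Dir
  | east
  | north
  | west
  | south
  deriving DecidableEq

namespace Dir

instance : Fintype Dir := ⟨{east, north, west, south}, fun d => by cases d <;> decide⟩

def vec : Dir → ℤ × ℤ
  | east => (1, 0)
  | north => (0, 1)
  | west => (-1, 0)
  | south => (0, -1)

/-- The new direction after crossing a cell with diagonal `c -- c + (1, 1)`. -/
def turnPlus : Dir → Dir
  | east => north
  | north => east
  | west => south
  | south => west

/-- The new direction after crossing a cell with diagonal `c + (0, 1) -- c + (1, 0)`. -/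
def turnMinus : Dir → Dir
  | east => south
  | south => east
  | west => north
  | north => west

def leftCorner : Dir → ℤ × ℤ
  | east => (0, 1)
  | north => (0, 0)
  | west => (1, 0)
  | south => (1, 1)

def rightCorner : Dir → ℤ × ℤ
  | east => (0, 0)
  | north => (1, 0)
  | west => (1, 1)
  | south => (0, 1)

theorem turnPlus_involutive : Function.Involutive turnPlus := by
  intro d; cases d <;> rfl

theorem turnMinus_involutive : Function.Involutive turnMinus := by
  intro d; cases d <;> rfl

end Dir

/- A state `(c, d)` of the walk: it has just entered the cell with lower-left corner `c`,
moving in direction `d`. The side it crossed has the corner `leftVertex (c, d)` on its left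
and `rightVertex (c, d)` on its right. -/

variable (G : SimpleGraph (ℤ × ℤ))

open Classical in
noncomputable def turn (s : (ℤ × ℤ) × Dir) : Dir :=
  if G.Adj s.1 (s.1 + (1, 1)) then s.2.turnPlus else s.2.turnMinus

noncomputable def step (s : (ℤ × ℤ) × Dir) : (ℤ × ℤ) × Dir :=
  (s.1 + (turn G s).vec, turn G s)

def leftVertex (s : (ℤ × ℤ) × Dir) : ℤ × ℤ := s.1 + s.2.leftCorner

def rightVertex (s : (ℤ × ℤ) × Dir) : ℤ × ℤ := s.1 + s.2.rightCorner

theorem step_fst_sub_vec (s : (ℤ × ℤ) × Dir) : (step G s).1 - (step G s).2.vec = s.1 := by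
  simp [step]

theorem step_injective : Function.Injective (step G) := by
  rintro ⟨c, d⟩ ⟨c', d'⟩ h
  obtain ⟨hc, hd⟩ := Prod.ext_iff.mp h
  simp only [step] at hc hd
  rw [hd, add_left_inj] at hc
  subst hc
  simp only [turn] at hd
  split_ifs at hd
  · rw [Dir.turnPlus_involutive.injective hd]
  · rw [Dir.turnMinus_involutive.injective hd]

variable {G}

theorem reachable_step {s : (ℤ × ℤ) × Dir}
    (hs : G.Adj s.1 (s.1 + (1, 1)) ∨ G.Adj (s.1 + (0, 1)) (s.1 + (1, 0))) :
    G.Reachable (leftVertex s) (leftVertex (step G s)) ∧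
      G.Reachable (rightVertex s) (rightVertex (step G s)) := by
  obtain ⟨⟨x, y⟩, d⟩ := s
  by_cases hp : G.Adj (x, y) ((x, y) + (1, 1))
  · simp only [Prod.mk_add_mk] at hp
    cases d <;> simp [leftVertex, rightVertex, step, turn, hp, Dir.turnPlus, Dir.vec,
      Dir.leftCorner, Dir.rightCorner, hp.reachable, hp.symm.reachable]
  · have hm := hs.resolve_left hp
    simp only [Prod.mk_add_mk, add_zero] at hp hm
    cases d <;> simp [leftVertex, rightVertex, step, turn, hp, Dir.turnMinus, Dir.vec,
      Dir.leftCorner, Dir.rightCorner, hm.reachable, hm.symm.reachable]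

theorem exists_exit {C : Set (ℤ × ℤ)} (hC : C.Finite)
    (hdiag : ∀ c ∈ C, G.Adj c (c + (1, 1)) ∨ G.Adj (c + (0, 1)) (c + (1, 0)))
    {s : (ℤ × ℤ) × Dir} (hs : s.1 ∈ C) (hs' : s.1 - s.2.vec ∉ C) :
    ∃ t : (ℤ × ℤ) × Dir, t.1 - t.2.vec ∈ C ∧ t.1 ∉ C ∧
      G.Reachable (leftVertex s) (leftVertex t) ∧ G.Reachable (rightVertex s) (rightVertex t) := by
  have hpre : ∀ b ∈ C ×ˢ (Set.univ : Set Dir), step G b ≠ s := by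
    rintro b ⟨hb, -⟩ rfl
    exact hs' (by rwa [step_fst_sub_vec])
  obtain ⟨n, hin, hout⟩ := (step_injective G).exists_iterate_leaves
    (hC.prod Set.finite_univ) (Set.mk_mem_prod hs trivial) hpre
  have hreach : ∀ m ≤ n + 1, G.Reachable (leftVertex s) (leftVertex ((step G)^[m] s)) ∧
      G.Reachable (rightVertex s) (rightVertex ((step G)^[m] s)) := by
    intro m hm
    induction m with
    | zero => exact ⟨.rfl, .rfl⟩
    | succ m ih =>
      obtain ⟨hl, hr⟩ := ih (by omega)
      obtain ⟨hl', hr'⟩ := reachable_step (hdiag _ (hin m (by omega)).1)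
      rw [Function.iterate_succ_apply']
      exact ⟨hl.trans hl', hr.trans hr'⟩
  refine ⟨_, ?_, fun h => hout ⟨h, trivial⟩, hreach (n + 1) le_rfl⟩
  rw [Function.iterate_succ_apply', step_fst_sub_vec]
  exact (hin n le_rfl).1

end DiagonalWalk

namespace DiagonalGraph

variable {k : ℕ} {H : SimpleGraph (Fin k × Fin k)}

def gridEmbedding (k : ℕ) : Fin k × Fin k ↪ ℤ × ℤ where
  toFun a := (a.1, a.2)
  inj' a b h := by
    simp only [Prod.mk.injEq, Nat.cast_inj, Fin.val_inj] at h
    exact Prod.ext h.1 h.2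

@[simp]
theorem gridEmbedding_apply (a : Fin k × Fin k) : gridEmbedding k a = ((a.1 : ℤ), (a.2 : ℤ)) :=
  rfl

/-- Cells are named by their lower-left corner; these are the cells of the grid and its frame. -/
def frameBox (k : ℕ) : Set (ℤ × ℤ) := Set.Icc (-1) ((k : ℤ) - 1) ×ˢ Set.Icc (-1) ((k : ℤ) - 1)

def innerBox (k : ℕ) : Set (ℤ × ℤ) := Set.Icc 0 ((k : ℤ) - 2) ×ˢ Set.Icc 0 ((k : ℤ) - 2)

@[simp]
theorem mem_frameBox {c : ℤ × ℤ} :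
    c ∈ frameBox k ↔ -1 ≤ c.1 ∧ c.1 ≤ (k : ℤ) - 1 ∧ -1 ≤ c.2 ∧ c.2 ≤ (k : ℤ) - 1 := by
  simp only [frameBox, Set.mem_prod, Set.mem_Icc, and_assoc]

@[simp]
theorem mem_innerBox {c : ℤ × ℤ} :
    c ∈ innerBox k ↔ 0 ≤ c.1 ∧ c.1 ≤ (k : ℤ) - 2 ∧ 0 ≤ c.2 ∧ c.2 ≤ (k : ℤ) - 2 := by
  simp only [innerBox, Set.mem_prod, Set.mem_Icc, and_assoc]

def IsCellDiagonal (c u v : ℤ × ℤ) : Prop :=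
  (u.1 = c.1 ∧ v.1 = c.1 + 1 ∨ u.1 = c.1 + 1 ∧ v.1 = c.1) ∧
    (u.2 = c.2 ∧ v.2 = c.2 + 1 ∨ u.2 = c.2 + 1 ∧ v.2 = c.2)

/-- In the bottom and top rows of the frame every cell gets the diagonal joining odd vertices,
in the left and right columns the one joining even vertices. -/
def frameGraph (k : ℕ) : SimpleGraph (ℤ × ℤ) := SimpleGraph.fromRel fun u v =>
  ∃ c ∈ frameBox k \ innerBox k, IsCellDiagonal c u v ∧
    ((c.2 = -1 ∨ c.2 = (k : ℤ) - 1) ↔ (u.1 + u.2) % 2 = 1)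

def augGraph (H : SimpleGraph (Fin k × Fin k)) : SimpleGraph (ℤ × ℤ) :=
  H.map (gridEmbedding k) ⊔ frameGraph k

theorem frameGraph_adj {u v : ℤ × ℤ} (h : (frameGraph k).Adj u v) :
    ∃ c ∈ frameBox k \ innerBox k, IsCellDiagonal c u v ∧
      ((c.2 = -1 ∨ c.2 = (k : ℤ) - 1) ↔ (u.1 + u.2) % 2 = 1) := by
  obtain ⟨-, ⟨c, hc, hd, hp⟩ | ⟨c, hc, hd, hp⟩⟩ := h
  · exact ⟨c, hc, hd, hp⟩
  · refine ⟨c, hc, ?_, ?_⟩ <;> unfold IsCellDiagonal at * <;> omega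

theorem augGraph_adj_parity (hH : IsDiagonalGraph k H) {u v : ℤ × ℤ}
    (h : (augGraph H).Adj u v) : (u.1 + u.2) % 2 = (v.1 + v.2) % 2 := by
  rcases h with h | h
  · obtain ⟨a, b, hab, rfl, rfl⟩ := (map_adj _ _ _ _).mp h
    have := hH.2 a b hab
    simp only [gridEmbedding_apply]
    omega
  · obtain ⟨c, -, hd, -⟩ := frameGraph_adj h
    unfold IsCellDiagonal at hd
    omega

theorem augGraph_adj_of_odd {u v : ℤ × ℤ} (h : (augGraph H).Adj u v)
    (hu : (u.1 + u.2) % 2 = 1) :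
    (u.2 ≤ 0 ∧ v.2 ≤ 0) ∨ ((k : ℤ) - 1 ≤ u.2 ∧ (k : ℤ) - 1 ≤ v.2) ∨
      (H.map (gridEmbedding k)).Adj u v := by
  rcases h with h | h
  · exact .inr (.inr h)
  · obtain ⟨c, hc, hd, hp⟩ := frameGraph_adj h
    simp only [Set.mem_sdiff, mem_frameBox, mem_innerBox] at hc
    unfold IsCellDiagonal at hd
    omega

theorem augGraph_adj_of_even {u v : ℤ × ℤ} (h : (augGraph H).Adj u v)
    (hu : (u.1 + u.2) % 2 = 0) :
    (u.1 ≤ 0 ∧ v.1 ≤ 0) ∨ ((k : ℤ) - 1 ≤ u.1 ∧ (k : ℤ) - 1 ≤ v.1) ∨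
      (H.map (gridEmbedding k)).Adj u v := by
  rcases h with h | h
  · exact .inr (.inr h)
  · obtain ⟨c, hc, hd, hp⟩ := frameGraph_adj h
    simp only [Set.mem_sdiff, mem_frameBox, mem_innerBox] at hc
    unfold IsCellDiagonal at hd
    omega

theorem augGraph_adj_of_bottom {u v : ℤ × ℤ} (h : (augGraph H).Adj u v) (hu : u.2 = -1) :
    (u.1 + u.2) % 2 = 1 := by
  rcases h with h | h
  · obtain ⟨a, b, -, rfl, rfl⟩ := (map_adj _ _ _ _).mp h
    simp only [gridEmbedding_apply] at hu
    omega
  · obtain ⟨c, hc, hd, hp⟩ := frameGraph_adj h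
    simp only [Set.mem_sdiff, mem_frameBox, mem_innerBox] at hc
    unfold IsCellDiagonal at hd
    omega

theorem augGraph_adj_of_left {u v : ℤ × ℤ} (h : (augGraph H).Adj u v) (hu : u.1 = -1)
    (h1 : 1 ≤ u.2) (h2 : u.2 ≤ (k : ℤ) - 2) : (u.1 + u.2) % 2 = 0 := by
  rcases h with h | h
  · obtain ⟨a, b, -, rfl, rfl⟩ := (map_adj _ _ _ _).mp h
    simp only [gridEmbedding_apply] at hu
    omega
  · obtain ⟨c, hc, hd, hp⟩ := frameGraph_adj h
    simp only [Set.mem_sdiff, mem_frameBox, mem_innerBox] at hc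
    unfold IsCellDiagonal at hd
    omega

theorem innerBox_diagonal (hH : IsDiagonalGraph k H) {c : ℤ × ℤ} (hc : c ∈ innerBox k) :
    (H.map (gridEmbedding k)).Adj c (c + (1, 1)) ∨
      (H.map (gridEmbedding k)).Adj (c + (0, 1)) (c + (1, 0)) := by
  obtain ⟨x, y⟩ := c
  simp only [mem_innerBox] at hc
  obtain ⟨i, rfl⟩ := Int.eq_ofNat_of_zero_le hc.1
  obtain ⟨j, rfl⟩ := Int.eq_ofNat_of_zero_le hc.2.2.1
  have hi : i + 1 < k := by omega
  have hj : j + 1 < k := by omega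
  by_cases hp : H.Adj (⟨i, by omega⟩, ⟨j, by omega⟩) (⟨i + 1, hi⟩, ⟨j + 1, hj⟩)
  · exact .inl ((map_adj _ _ _ _).mpr ⟨_, _, hp, rfl, by simp⟩)
  · have hm := not_not.mp ((hH.1 i j hi hj).not.mp hp)
    exact .inr ((map_adj _ _ _ _).mpr ⟨_, _, hm, by simp, by simp⟩)

theorem augGraph_diagonal (hH : IsDiagonalGraph k H) {c : ℤ × ℤ} (hc : c ∈ frameBox k) :
    (augGraph H).Adj c (c + (1, 1)) ∨ (augGraph H).Adj (c + (0, 1)) (c + (1, 0)) := by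
  by_cases hin : c ∈ innerBox k
  · exact (innerBox_diagonal hH hin).imp .inl .inl
  obtain ⟨x, y⟩ := c
  by_cases hp : (y = -1 ∨ y = (k : ℤ) - 1) ↔ (x + y) % 2 = 1
  · refine .inl (.inr ⟨by simp, .inl ⟨(x, y), ⟨hc, hin⟩, ?_, hp⟩⟩)
    simp [IsCellDiagonal]
  · refine .inr (.inr ⟨by simp, .inl ⟨(x, y), ⟨hc, hin⟩, ?_, ?_⟩⟩)
    · simp [IsCellDiagonal]
    · simp only [Prod.mk_add_mk, add_zero]
      omega

theorem augGraph_reachable_even (hH : IsDiagonalGraph k H) {v : ℤ × ℤ}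
    (h : (augGraph H).Reachable (-1, 1) v) : (v.1 + v.2) % 2 = 0 ∧ v.2 ≠ -1 := by
  refine h.of_forall_adj (P := fun w => (w.1 + w.2) % 2 = 0 ∧ w.2 ≠ -1)
    (fun u w huw ⟨hu, _⟩ => ⟨?_, fun hw => ?_⟩) (by norm_num)
  · rw [← augGraph_adj_parity hH huw, hu]
  · have := augGraph_adj_of_bottom huw.symm hw
    rw [← augGraph_adj_parity hH huw, hu] at this
    omega

theorem augGraph_reachable_odd (hH : IsDiagonalGraph k H) {v : ℤ × ℤ}
    (h : (augGraph H).Reachable (-1, 0) v) :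
    (v.1 + v.2) % 2 = 1 ∧ ¬ (v.1 = -1 ∧ 1 ≤ v.2 ∧ v.2 ≤ (k : ℤ) - 2) := by
  refine h.of_forall_adj
    (P := fun w => (w.1 + w.2) % 2 = 1 ∧ ¬ (w.1 = -1 ∧ 1 ≤ w.2 ∧ w.2 ≤ (k : ℤ) - 2))
    (fun u w huw ⟨hu, _⟩ => ⟨?_, fun ⟨hw1, hw2, hw3⟩ => ?_⟩) (by norm_num)
  · rw [← augGraph_adj_parity hH huw, hu]
  · have := augGraph_adj_of_left huw.symm hw1 hw2 hw3
    rw [← augGraph_adj_parity hH huw, hu] at this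
    omega

theorem augGraph_crossing (hk : 0 < k) (hH : IsDiagonalGraph k H) :
    (∃ v, (augGraph H).Reachable (-1, 0) v ∧ (k : ℤ) - 1 ≤ v.2) ∨
      (∃ v, (augGraph H).Reachable (-1, 1) v ∧ (k : ℤ) - 1 ≤ v.1) := by
  obtain ⟨⟨⟨x, y⟩, d⟩, hlast, hout, hA, hB⟩ := DiagonalWalk.exists_exit (C := frameBox k)
    ((Set.finite_Icc _ _).prod (Set.finite_Icc _ _)) (fun c hc => augGraph_diagonal hH hc)
    (s := ((-1, 0), .east)) (by simp; omega) (by simp [DiagonalWalk.Dir.vec])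
  have hA' := augGraph_reachable_even hH hA
  have hB' := augGraph_reachable_odd hH hB
  simp only [mem_frameBox] at hlast hout
  -- Leaving east or north gives the crossing; leaving south, or west below row `k - 2`,
  -- contradicts the two lemmas above.
  cases d <;>
    simp only [DiagonalWalk.leftVertex, DiagonalWalk.rightVertex, DiagonalWalk.Dir.vec,
      DiagonalWalk.Dir.leftCorner, DiagonalWalk.Dir.rightCorner, Prod.mk_add_mk, Prod.mk_sub_mk,
      add_zero, zero_add] at hA hB hA' hB' hlast hout ⊢
  · exact .inr ⟨_, hA, by omega⟩
  · exact .inl ⟨_, hB, by omega⟩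
  · by_cases hy : (k : ℤ) - 2 ≤ y
    · exact .inl ⟨_, hB, by omega⟩
    · omega
  · omega

end DiagonalGraph

open DiagonalGraph in
theorem IsDiagonalGraph.exists_crossing {k : ℕ} {H : SimpleGraph (Fin k × Fin k)}
    (hH : IsDiagonalGraph k H) (hk : 2 ≤ k) :
    (∃ a b : Fin k × Fin k, (a.2 : ℤ) = 0 ∧ (b.2 : ℤ) = k - 1 ∧ H.Reachable a b) ∨
      (∃ a b : Fin k × Fin k, (a.1 : ℤ) = 0 ∧ (b.1 : ℤ) = k - 1 ∧ H.Reachable a b) := by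
  have hk' : (0 : ℤ) < k - 1 := by omega
  refine (augGraph_crossing (by omega) hH).imp (fun ⟨v, hv, hvk⟩ => ?_) (fun ⟨v, hv, hvk⟩ => ?_)
  · refine hv.exists_reachable_crossing (gridEmbedding k) {w | (w.1 + w.2) % 2 = 1} Prod.snd
      hk' (fun a => by simp only [gridEmbedding_apply]; omega)
      (fun u w huw hu => ⟨?_, augGraph_adj_of_odd huw hu⟩) (by norm_num) (by norm_num) hvk
    exact (augGraph_adj_parity hH huw).symm.trans hu
  · refine hv.exists_reachable_crossing (gridEmbedding k) {w | (w.1 + w.2) % 2 = 0} Prod.fst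
      hk' (fun a => by simp only [gridEmbedding_apply]; omega)
      (fun u w huw hu => ⟨?_, augGraph_adj_of_even huw hu⟩) (by norm_num) (by norm_num) hvk
    exact (augGraph_adj_parity hH huw).symm.trans hu

/-- Every diagonal graph on the `k × k` grid has a connected component containing at least
one vertex from every row, or a connected component containing at least one vertex from
every column.  (Row `j` is `{(i, j) : i}` and column `i` is `{(i, j) : j}`.) -/
theorem diagonal_graph_spanning_component (k : ℕ) (hk : 2 ≤ k)
    (H : SimpleGraph (Fin k × Fin k)) (hH : IsDiagonalGraph k H) :
    (∃ v : Fin k × Fin k, ∀ j : Fin k, ∃ i : Fin k, H.Reachable v (i, j)) ∨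
    (∃ v : Fin k × Fin k, ∀ i : Fin k, ∃ j : Fin k, H.Reachable v (i, j)) := by
  refine (hH.exists_crossing hk).imp (fun ⟨a, b, ha, hb, hab⟩ => ⟨a, fun j => ?_⟩)
    (fun ⟨a, b, ha, hb, hab⟩ => ⟨a, fun i => ?_⟩)
  · obtain ⟨⟨x, y⟩, hax, hy⟩ := hab.exists_reachable_eq (fun v => (v.2 : ℤ))
      (fun u v huv => by have := (hH.2 u v huv).2; omega) (t := j) (by omega) (by omega)
    obtain rfl : y = j := Fin.ext (by simpa using hy)
    exact ⟨x, hax⟩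
  · obtain ⟨⟨x, y⟩, hax, hx⟩ := hab.exists_reachable_eq (fun v => (v.1 : ℤ))
      (fun u v huv => by have := (hH.2 u v huv).1; omega) (t := i) (by omega) (by omega)
    obtain rfl : x = i := Fin.ext (by simpa using hx)
    exact ⟨y, hax⟩
end

section
/- Let k ≥ 2 be an integer, let H_D be a diagonal graph on V = {(i,j) : 0 ≤ i,j ≤ k−1}, and suppose that no connected component of H_D contains both a vertex of the top row and a vertex of the bottom row. Then every vertex of the boundary graph H_B has degree 0, 1, 2, or 4 in H_B; in particular, no vertex of H_B has degree 3. -/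
open SimpleGraph

/-- `V_U`: the set of vertices lying in connected components of `H` that contain at least one
vertex of the top row (row `k - 1`). -/
def upperVerts (k : ℕ) (H : SimpleGraph (Fin k × Fin k)) : Set (Fin k × Fin k) :=
  {v | ∃ u : Fin k × Fin k, (u.2 : ℕ) = k - 1 ∧ H.Reachable v u}

/-- The boundary graph `H_B` of a diagonal graph `H`: its edges are those edges `{a, b}` of
`H` such that `a ∉ V_U`, `b ∉ V_U`, and exactly one of the two other corners `(a.1, b.2)`,
`(b.1, a.2)` of the 2×2 square having `{a, b}` as a diagonal lies in `V_U`. -/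
def boundaryGraph (k : ℕ) (H : SimpleGraph (Fin k × Fin k)) :
    SimpleGraph (Fin k × Fin k) where
  Adj a b := H.Adj a b ∧ a ∉ upperVerts k H ∧ b ∉ upperVerts k H ∧
    ((a.1, b.2) ∈ upperVerts k H ↔ (b.1, a.2) ∉ upperVerts k H)
  symm := by
    constructor
    rintro a b ⟨h1, h2, h3, h4⟩
    exact ⟨h1.symm, h3, h2, by tauto⟩
  loopless := ⟨fun a h => H.irrefl h.1⟩

/-- The degree of a vertex in the boundary graph. -/
noncomputable def boundaryDegree (k : ℕ) (H : SimpleGraph (Fin k × Fin k))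
    (v : Fin k × Fin k) : ℕ :=
  {u : Fin k × Fin k | (boundaryGraph k H).Adj v u}.ncard

/-! Let `v ∉ V_U` and let `u` be the corner opposite `v` in one of the squares at `v`. Then
`{v, u}` is an edge of `H_B` exactly when the other two corners `c, d` lie on different sides of
`V_U`: the diagonal `{c, d}` would put them in one component, so `H` must contain `{v, u}`, and
then `u ∉ V_U` as well. Writing `u = (p, q)`, so that `c = (p, v.2)` and `d = (v.1, q)`, the
`H_B`-neighbours of `v` are the pairs of path-neighbours `p` of `v.1` and `q` of `v.2` for which
exactly one of `c, d` lies in `V_U`. If `a` resp. `a'` of the at most two `p` give `c ∈ V_U`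
resp. `c ∉ V_U`, and `b, b'` likewise for `q`, there are `a * b' + a' * b` such pairs, and
`a + a' ≤ 2`, `b + b' ≤ 2` leave only the values 0, 1, 2 and 4. -/

namespace Set

variable {α β : Type*} {s : Set α} {t : Set β}

theorem ncard_prod_inter_not_iff (hs : s.Finite) (ht : t.Finite) (p : α → Prop)
    (q : β → Prop) :
    (s ×ˢ t ∩ {x | ¬(p x.1 ↔ q x.2)}).ncard =
      (s ∩ {a | p a}).ncard * (t \ {b | q b}).ncard +
        (s \ {a | p a}).ncard * (t ∩ {b | q b}).ncard := by
  rw [← ncard_prod, ← ncard_prod, ← ncard_union_eq _ ((hs.inter_of_left _).prod ht.sdiff)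
    (hs.sdiff.prod (ht.inter_of_left _))]
  · congr 1
    ext x
    simp only [mem_inter_iff, mem_prod, mem_ofPred_eq, mem_union, mem_sdiff]
    tauto
  · rw [disjoint_left]
    rintro x ⟨⟨-, hp⟩, -⟩ ⟨⟨-, hnp⟩, -⟩
    exact hnp hp

theorem ncard_prod_inter_not_iff_mem (hs : s.Finite) (ht : t.Finite) (hs₂ : s.ncard ≤ 2)
    (ht₂ : t.ncard ≤ 2) (p : α → Prop) (q : β → Prop) :
    (s ×ˢ t ∩ {x | ¬(p x.1 ↔ q x.2)}).ncard ∈ ({0, 1, 2, 4} : Set ℕ) := by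
  rw [ncard_prod_inter_not_iff hs ht]
  have hs' := ncard_inter_add_ncard_sdiff_eq_ncard s {a | p a} hs
  have ht' := ncard_inter_add_ncard_sdiff_eq_ncard t {b | q b} ht
  generalize (s ∩ {a | p a}).ncard = a, (s \ {a | p a}).ncard = a',
    (t ∩ {b | q b}).ncard = b, (t \ {b | q b}).ncard = b' at *
  obtain ⟨ha, ha', hb, hb'⟩ : a ≤ 2 ∧ a' ≤ 2 ∧ b ≤ 2 ∧ b' ≤ 2 := by omega
  simp only [mem_insert_iff, mem_singleton_iff]
  interval_cases a <;> interval_cases a' <;> interval_cases b <;> interval_cases b' <;> omega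

end Set

theorem ncard_neighborSet_pathGraph_le_two {k : ℕ} (i : Fin k) :
    ((pathGraph k).neighborSet i).ncard ≤ 2 :=
  calc ((pathGraph k).neighborSet i).ncard
      = (Fin.val '' (pathGraph k).neighborSet i).ncard :=
        (Set.ncard_image_of_injective _ Fin.val_injective).symm
    _ ≤ ({(i : ℕ) - 1, (i : ℕ) + 1} : Set ℕ).ncard := by
        refine Set.ncard_le_ncard ?_ (Set.toFinite _)
        rintro _ ⟨j, hj, rfl⟩
        simp only [mem_neighborSet, pathGraph_adj] at hj
        simp only [Set.mem_insert_iff, Set.mem_singleton_iff]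
        omega
    _ ≤ 2 := (Set.ncard_insert_le _ _).trans (by simp)

namespace IsDiagonalGraph

variable {k : ℕ} {H : SimpleGraph (Fin k × Fin k)}

theorem pathGraph_adj_of_adj (hH : IsDiagonalGraph k H) {x y : Fin k × Fin k}
    (h : H.Adj x y) : (pathGraph k).Adj x.1 y.1 ∧ (pathGraph k).Adj x.2 y.2 := by
  simp only [pathGraph_adj]
  exact hH.2 x y h

theorem adj_or_adj_swap (hH : IsDiagonalGraph k H) {x y : Fin k × Fin k}
    (h₁ : (pathGraph k).Adj x.1 y.1) (h₂ : (pathGraph k).Adj x.2 y.2) :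
    H.Adj x y ∨ H.Adj (x.1, y.2) (y.1, x.2) := by
  obtain ⟨⟨i, hi⟩, ⟨j, hj⟩⟩ := x
  obtain ⟨⟨i', hi'⟩, ⟨j', hj'⟩⟩ := y
  simp only [pathGraph_adj] at h₁ h₂
  rcases h₁ with rfl | rfl <;> rcases h₂ with rfl | rfl
  · have := hH.1 i j hi' hj'; tauto
  · have := hH.1 i j' hi' hj; tauto
  · have := hH.1 i' j hi hj'; tauto
  · have := hH.1 i' j' hi hj; tauto

end IsDiagonalGraph

theorem mem_upperVerts_iff_of_adj {k : ℕ} {H : SimpleGraph (Fin k × Fin k)}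
    {x y : Fin k × Fin k} (h : H.Adj x y) : x ∈ upperVerts k H ↔ y ∈ upperVerts k H :=
  ⟨fun ⟨u, hu, hyu⟩ => ⟨u, hu, h.symm.reachable.trans hyu⟩,
    fun ⟨u, hu, hyu⟩ => ⟨u, hu, h.reachable.trans hyu⟩⟩

theorem boundaryGraph_adj_iff {k : ℕ} {H : SimpleGraph (Fin k × Fin k)}
    (hH : IsDiagonalGraph k H) {v u : Fin k × Fin k} (hv : v ∉ upperVerts k H) :
    (boundaryGraph k H).Adj v u ↔
      (pathGraph k).Adj v.1 u.1 ∧ (pathGraph k).Adj v.2 u.2 ∧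
        ¬((u.1, v.2) ∈ upperVerts k H ↔ (v.1, u.2) ∈ upperVerts k H) := by
  constructor
  · rintro ⟨hvu, -, -, hcorners⟩
    exact ⟨(hH.pathGraph_adj_of_adj hvu).1, (hH.pathGraph_adj_of_adj hvu).2, by tauto⟩
  · rintro ⟨h₁, h₂, hcorners⟩
    have hvu : H.Adj v u := (hH.adj_or_adj_swap h₁ h₂).resolve_right fun h =>
      hcorners (mem_upperVerts_iff_of_adj h).symm
    exact ⟨hvu, hv, fun hu => hv ((mem_upperVerts_iff_of_adj hvu).2 hu), by tauto⟩

theorem boundaryGraph_degrees_general (k : ℕ) (H : SimpleGraph (Fin k × Fin k))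
    (hH : IsDiagonalGraph k H) :
    ∀ v : Fin k × Fin k, v ∉ upperVerts k H →
      boundaryDegree k H v ∈ ({0, 1, 2, 4} : Set ℕ) := by
  intro v hv
  have hneighbors : {u | (boundaryGraph k H).Adj v u} =
      (pathGraph k).neighborSet v.1 ×ˢ (pathGraph k).neighborSet v.2 ∩
        {u | ¬((u.1, v.2) ∈ upperVerts k H ↔ (v.1, u.2) ∈ upperVerts k H)} := by
    ext u
    simp only [Set.mem_ofPred_eq, boundaryGraph_adj_iff hH hv, Set.mem_inter_iff, Set.mem_prod,
      mem_neighborSet, and_assoc]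
  rw [boundaryDegree, hneighbors]
  exact Set.ncard_prod_inter_not_iff_mem (Set.toFinite _) (Set.toFinite _)
    (ncard_neighborSet_pathGraph_le_two _) (ncard_neighborSet_pathGraph_le_two _)
    (fun a => (a, v.2) ∈ upperVerts k H) (fun b => (v.1, b) ∈ upperVerts k H)

/-- If no connected component of a diagonal graph `H` contains both a vertex of the top row
and a vertex of the bottom row, then every vertex of the boundary graph `H_B` has degree
0, 1, 2 or 4; in particular, no vertex of `H_B` has degree 3. -/
theorem boundaryGraph_degrees (k : ℕ) (hk : 2 ≤ k) (H : SimpleGraph (Fin k × Fin k))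
    (hH : IsDiagonalGraph k H)
    (hsep : ¬ ∃ u v : Fin k × Fin k,
      (u.2 : ℕ) = k - 1 ∧ (v.2 : ℕ) = 0 ∧ H.Reachable u v) :
    ∀ v : Fin k × Fin k, v ∉ upperVerts k H →
      boundaryDegree k H v ∈ ({0, 1, 2, 4} : Set ℕ) :=
  boundaryGraph_degrees_general k H hH
end
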